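/- arXiv:math/0511431 — 6 statements merged into one kernel-verified Lean document; each statement's English description precedes it below -/
import Mathlib

section
/- For 0 ≤ k ≤ n, the total number of chains of length k appearing in the chain decompositions of all elements of IS_n equals [n]_k * |IS_{n-k}|, where [n]_k = n(n-1)...(n-k+1) is the falling factorial and |IS_m| = sum over j of binom(m,j)^2 * j!. -/
def IsPInj (n : ℕ) (f : Fin n → Option (Fin n)) : Prop :=
  ∀ a b c, f a = some c → f b = some c → a = b

instance (n : ℕ) : DecidablePred (IsPInj n) := fun _ =>
  inferInstanceAs (Decidable (∀ _ _ _, _ → _ → _))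

/-- The symmetric inverse semigroup `IS_n`: partial injective maps on `{1,…,n}`. -/
def PInj (n : ℕ) := {f : Fin n → Option (Fin n) // IsPInj n f}

instance (n : ℕ) : Fintype (PInj n) := Subtype.fintype _

/-- `iterMap n f k x` is `f^k(x)` as a partial map. -/
def iterMap (n : ℕ) (f : Fin n → Option (Fin n)) : ℕ → Fin n → Option (Fin n)
  | 0, x => some x
  | k + 1, x => (f x).bind (iterMap n f k)

/-- Size of the domain of a partial injection. -/
def domCard (n : ℕ) (α : PInj n) : ℕ :=
  (Finset.univ.filter (fun x => α.val x ≠ none)).card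

/-- `α` is nilpotent: some positive power is the empty map. -/
def Nilpotent (n : ℕ) (α : PInj n) : Prop :=
  ∃ k, 0 < k ∧ ∀ x, iterMap n α.val k x = none

/-- `|IS_m| = ∑_j binom(m,j)^2 j!`. -/
def cardIS (m : ℕ) : ℕ := ∑ j ∈ Finset.range (m + 1), (m.choose j) ^ 2 * j.factorial


/-- `x : Fin k → Fin n` enumerates a chain of length `k` of `α`: a maximal path
`x 0 → x 1 → ⋯ → x (k-1)` in the action graph. -/
def IsChainOf (n k : ℕ) (α : PInj n) (x : Fin k → Fin n) : Prop :=
  Function.Injective x ∧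
  (∀ i j : Fin k, (j : ℕ) = (i : ℕ) + 1 → α.val (x i) = some (x j)) ∧
  (∀ i : Fin k, (i : ℕ) = k - 1 → α.val (x i) = none) ∧
  (∀ i : Fin k, (i : ℕ) = 0 → ∀ y, α.val y ≠ some (x i))

/-! A maximal path `x` of a partial injection `f` determines `f` on `range x`, and `f` maps the
complement of `range x` into itself: the first point of the path has no preimage, and every later
one already has its unique preimage on the path. Conversely, every injection `x : Fin k ↪ X`
together with any partial injection of `(range x)ᶜ` glues to a partial injection having `x` as a
maximal path. So the pairs `(f, x)` correspond to `(x, f restricted to (range x)ᶜ)`, and there are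
`n.descFactorial k` choices of `x` and `|IS_{n-k}|` choices of the restriction. -/

open Function Set

noncomputable section

open scoped Classical

variable {X Y : Type*}

/- For `X = Fin n`, `PartialInj X` is `PInj n` and `IsMaximalPath α.val x` is `IsChainOf n k α x`,
both definitionally; a general carrier lets the complement of a path carry a partial injection. -/

def IsPartialInj (f : X → Option X) : Prop :=
  ∀ a b c, f a = some c → f b = some c → a = b

abbrev PartialInj (X : Type*) := {f : X → Option X // IsPartialInj f}

lemma IsPartialInj.arrowCongr {f : X → Option X} (hf : IsPartialInj f) (σ : X ≃ Y) :
    IsPartialInj (σ.arrowCongr σ.optionCongr f) := by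
  intro a b c ha hb
  simp only [Equiv.arrowCongr_apply, comp_apply, Equiv.optionCongr_apply,
    Option.map_eq_some_iff] at ha hb
  obtain ⟨a', ha', rfl⟩ := ha
  obtain ⟨b', hb', hab⟩ := hb
  rw [σ.injective hab] at hb'
  exact σ.symm.injective (hf _ _ _ ha' hb')

def PartialInj.congr (σ : X ≃ Y) : PartialInj X ≃ PartialInj Y :=
  (σ.arrowCongr σ.optionCongr).subtypeEquiv fun f =>
    ⟨fun hf => hf.arrowCongr σ, fun hf => by
      have := hf.arrowCongr σ.symm
      rwa [Equiv.optionCongr_symm, ← Equiv.arrowCongr_symm, Equiv.symm_apply_apply] at this⟩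

variable {k : ℕ}

def pathSucc (x : Fin k → X) (i : Fin k) : Option X :=
  if h : (i : ℕ) + 1 < k then some (x ⟨i + 1, h⟩) else none

def IsMaximalPath (f : X → Option X) (x : Fin k → X) : Prop :=
  Function.Injective x ∧
  (∀ i j : Fin k, (j : ℕ) = (i : ℕ) + 1 → f (x i) = some (x j)) ∧
  (∀ i : Fin k, (i : ℕ) = k - 1 → f (x i) = none) ∧
  (∀ i : Fin k, (i : ℕ) = 0 → ∀ y, f y ≠ some (x i))

section

variable {f : X → Option X} {x : Fin k → X}

lemma IsMaximalPath.apply_eq_pathSucc (hc : IsMaximalPath f x) (i : Fin k) :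
    f (x i) = pathSucc x i := by
  unfold pathSucc
  split_ifs with h
  · exact hc.2.1 i _ rfl
  · exact hc.2.2.1 i (by omega)

lemma IsMaximalPath.notMem_range_of_apply_eq (hf : IsPartialInj f) (hc : IsMaximalPath f x)
    {z y : X} (hz : z ∉ range x) (hzy : f z = some y) : y ∉ range x := by
  rintro ⟨j, rfl⟩
  rcases Nat.eq_zero_or_pos j with hj | hj
  · exact hc.2.2.2 j hj z hzy
  · have hprev := hc.2.1 ⟨j - 1, by omega⟩ j (Nat.sub_add_cancel hj).symm
    exact hz ⟨_, hf _ _ _ hprev hzy⟩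

end

def toCompl (s : Set X) (y : X) : Option ↥sᶜ :=
  if h : y ∈ s then none else some ⟨y, h⟩

def restrictCompl (f : X → Option X) (s : Set X) : ↥sᶜ → Option ↥sᶜ :=
  fun t => (f t).bind (toCompl s)

lemma IsPartialInj.restrictCompl {f : X → Option X} (hf : IsPartialInj f) (s : Set X) :
    IsPartialInj (restrictCompl f s) := by
  intro a b c ha hb
  simp only [_root_.restrictCompl, Option.bind_eq_some_iff, toCompl] at ha hb
  obtain ⟨ya, hfa, hya⟩ := ha
  obtain ⟨yb, hfb, hyb⟩ := hb
  split_ifs at hya hyb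
  cases hya; cases Option.some.inj hyb
  exact Subtype.ext (hf _ _ _ hfa hfb)

def extendPath (x : Fin k → X) (g : ↥(range x)ᶜ → Option ↥(range x)ᶜ) :
    X → Option X :=
  extend x (pathSucc x) fun z => if h : z ∈ range x then none else (g ⟨z, h⟩).map (↑)

section

variable {x : Fin k → X} {g : ↥(range x)ᶜ → Option ↥(range x)ᶜ}

lemma pathSucc_eq_some {i : Fin k} {c : X} :
    pathSucc x i = some c ↔ ∃ h : (i : ℕ) + 1 < k, x ⟨i + 1, h⟩ = c := by
  unfold pathSucc
  split_ifs with h <;> simp [h]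

lemma extendPath_apply (hx : Injective x) (i : Fin k) : extendPath x g (x i) = pathSucc x i :=
  hx.extend_apply _ _ i

lemma extendPath_apply_of_notMem {z : X} (hz : z ∉ range x) :
    extendPath x g z = (g ⟨z, hz⟩).map (↑) := by
  rw [extendPath, extend_apply' _ _ _ hz, dif_neg hz]

lemma notMem_range_of_extendPath_eq_some {z c : X} (hz : z ∉ range x)
    (hc : extendPath x g z = some c) : c ∉ range x := by
  rw [extendPath_apply_of_notMem hz, Option.map_eq_some_iff] at hc
  obtain ⟨t, -, rfl⟩ := hc
  exact t.2

lemma IsPartialInj.extendPath (hx : Injective x) (hg : IsPartialInj g) :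
    IsPartialInj (extendPath x g) := by
  intro a b c ha hb
  rcases em (a ∈ range x) with ⟨i, rfl⟩ | ha' <;>
    rcases em (b ∈ range x) with ⟨j, rfl⟩ | hb'
  · rw [extendPath_apply hx, pathSucc_eq_some] at ha hb
    obtain ⟨hi, rfl⟩ := ha
    obtain ⟨hj, hij⟩ := hb
    have : (j : ℕ) + 1 = i + 1 := Fin.ext_iff.mp (hx hij)
    exact congrArg x (Fin.ext (by omega))
  · rw [extendPath_apply hx, pathSucc_eq_some] at ha
    obtain ⟨hi, rfl⟩ := ha
    exact absurd ⟨_, rfl⟩ (notMem_range_of_extendPath_eq_some hb' hb)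
  · rw [extendPath_apply hx, pathSucc_eq_some] at hb
    obtain ⟨hj, rfl⟩ := hb
    exact absurd ⟨_, rfl⟩ (notMem_range_of_extendPath_eq_some ha' ha)
  · rw [extendPath_apply_of_notMem ha', Option.map_eq_some_iff] at ha
    rw [extendPath_apply_of_notMem hb', Option.map_eq_some_iff] at hb
    obtain ⟨t, ht, rfl⟩ := ha
    obtain ⟨u, hu, hut⟩ := hb
    exact congrArg Subtype.val (hg _ _ _ ht (Subtype.ext hut ▸ hu))

lemma isMaximalPath_extendPath (hx : Injective x) : IsMaximalPath (extendPath x g) x := by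
  refine ⟨hx, fun i j hij => ?_, fun i hi => ?_, fun i hi y hy => ?_⟩
  · rw [extendPath_apply hx, pathSucc_eq_some]
    exact ⟨hij ▸ j.2, congrArg x (Fin.ext hij.symm)⟩
  · rw [extendPath_apply hx, pathSucc, dif_neg (by omega)]
  · rcases em (y ∈ range x) with ⟨j, rfl⟩ | hy'
    · rw [extendPath_apply hx, pathSucc_eq_some] at hy
      obtain ⟨hj, hji⟩ := hy
      have : (j : ℕ) + 1 = i := Fin.ext_iff.mp (hx hji)
      omega
    · exact notMem_range_of_extendPath_eq_some hy' hy ⟨i, rfl⟩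

lemma restrictCompl_extendPath : restrictCompl (extendPath x g) (range x) = g := by
  funext t
  rw [restrictCompl, extendPath_apply_of_notMem t.2]
  cases g t with
  | none => rfl
  | some u => rw [Option.map_some, Option.bind_some, toCompl, dif_neg u.2]

lemma extendPath_restrictCompl {f : X → Option X} (hf : IsPartialInj f) (hc : IsMaximalPath f x) :
    extendPath x (restrictCompl f (range x)) = f := by
  funext z
  rcases em (z ∈ range x) with ⟨i, rfl⟩ | hz
  · rw [extendPath_apply hc.1, hc.apply_eq_pathSucc]
  · rw [extendPath_apply_of_notMem hz, restrictCompl]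
    cases hfz : f z with
    | none => rfl
    | some y => simp [toCompl, hc.notMem_range_of_apply_eq hf hz hfz]

end

variable (X k) in
def maximalPathEquiv :
    {p : PartialInj X × (Fin k → X) // IsMaximalPath p.1.1 p.2} ≃
      Σ x : Fin k ↪ X, PartialInj ↥(range x)ᶜ where
  toFun p := ⟨⟨p.1.2, p.2.1⟩, restrictCompl p.1.1.1 _, p.1.1.2.restrictCompl _⟩
  invFun q := ⟨(⟨extendPath q.1 q.2.1, q.2.2.extendPath q.1.injective⟩, q.1),
    isMaximalPath_extendPath q.1.injective⟩
  left_inv p := Subtype.ext (Prod.ext (Subtype.ext (extendPath_restrictCompl p.1.1.2 p.2)) rfl)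
  right_inv _ := Sigma.ext rfl (heq_of_eq (Subtype.ext restrictCompl_extendPath))

lemma card_compl_range [Fintype X] (x : Fin k ↪ X) :
    Fintype.card ↥(range x)ᶜ = Fintype.card X - k := by
  rw [Fintype.card_compl_set, Set.card_range_of_injective x.injective, Fintype.card_fin]

theorem card_maximalPath [Fintype X] :
    Nat.card {p : PartialInj X × (Fin k → X) // IsMaximalPath p.1.1 p.2} =
      (Fintype.card X).descFactorial k * Nat.card (PartialInj (Fin (Fintype.card X - k))) := by
  have hcompl (x : Fin k ↪ X) : Nat.card (PartialInj ↥(range x)ᶜ) =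
      Nat.card (PartialInj (Fin (Fintype.card X - k))) :=
    Nat.card_congr (PartialInj.congr (Fintype.equivFinOfCardEq (card_compl_range x)))
  rw [Nat.card_congr (maximalPathEquiv X k), Nat.card_sigma]
  simp only [hcompl, Finset.sum_const, Finset.card_univ, smul_eq_mul, Fintype.card_embedding_eq,
    Fintype.card_fin]

end

theorem stmt4_general (n k : ℕ) :
    Set.ncard {p : PInj n × (Fin k → Fin n) | IsChainOf n k p.1 p.2}
      = n.descFactorial k * Nat.card (PInj (n - k)) := by
  rw [← Nat.card_coe_set_eq]
  have h := card_maximalPath (X := Fin n) (k := k)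
  rw [Fintype.card_fin] at h
  exact h

theorem stmt4 (n k : ℕ) (h : k ≤ n) :
    Set.ncard {p : PInj n × (Fin k → Fin n) | IsChainOf n k p.1 p.2}
      = n.descFactorial k * Nat.card (PInj (n - k)) :=
  stmt4_general n k
end

section
/- For every n ≥ 1: sum over k from 0 to n-1 of (n-k)*binom(n,k)^2*k! equals sum over k from 1 to n of [n]_k * |IS_{n-k}|, where [n]_k is the falling factorial and |IS_m| = sum_j binom(m,j)^2 * j!. -/
/-!
Both sides satisfy `X (n + 1) = (n + 1) * (|IS_n| + X n)` and vanish at `n = 0`, so induction applies.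
For the right side this is `(n + 1)^{(k + 1)} = (n + 1) * n^{(k)}`. For the left side, the identity
`(n + 1 - k) * C(n + 1, k) = (n + 1) * C(n, k)` reduces it to `(n + 1) * ∑ C(n, k) C(n + 1, k) k!`,
and Pascal's rule `C(n + 1, k + 1) = C(n, k + 1) + C(n, k)` splits this sum into `|IS_n|` and,
via `C(n, k + 1) * (k + 1) = C(n, k) * (n - k)`, into the left side at `n`.
-/

open Finset Nat

lemma sum_Icc_one_eq_sum_range {M : Type*} [AddCommMonoid M] (f : ℕ → M) (n : ℕ) :
    ∑ k ∈ Icc 1 n, f k = ∑ k ∈ range n, f (k + 1) := by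
  rw [← Ico_add_one_right_eq_Icc, sum_Ico_eq_sum_range]
  simp [add_comm]

lemma sum_Icc_descFactorial_mul_cardIS_succ (n : ℕ) :
    ∑ k ∈ Icc 1 (n + 1), (n + 1).descFactorial k * cardIS (n + 1 - k)
      = (n + 1) * (cardIS n + ∑ k ∈ Icc 1 n, n.descFactorial k * cardIS (n - k)) := by
  rw [sum_Icc_one_eq_sum_range, sum_Icc_one_eq_sum_range, sum_range_succ', mul_add, mul_sum,
    add_comm (_ * cardIS n)]
  congr 1
  · refine sum_congr rfl fun k _ => ?_
    rw [succ_descFactorial_succ, Nat.add_sub_add_right, mul_assoc]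
  · simp

lemma sum_choose_mul_choose_succ_mul_factorial (n : ℕ) :
    ∑ k ∈ range (n + 1), n.choose k * ((n + 1).choose k * k !)
      = cardIS n + ∑ k ∈ range n, (n - k) * (n.choose k ^ 2 * k !) := by
  have pascal_split (k : ℕ) :
      n.choose (k + 1) * ((n + 1).choose (k + 1) * (k + 1)!)
        = n.choose (k + 1) ^ 2 * (k + 1)! + (n - k) * (n.choose k ^ 2 * k !) := by
    calc _ = n.choose (k + 1) ^ 2 * (k + 1)! + n.choose (k + 1) * (k + 1) * n.choose k * k ! := by
          rw [choose_succ_succ', factorial_succ]; ring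
      _ = _ := by rw [choose_succ_right_eq]; ring
  rw [cardIS, sum_range_succ', sum_range_succ' _ n]
  simp only [pascal_split, sum_add_distrib, choose_zero_right, factorial_zero]
  ring

lemma sum_range_sub_mul_choose_sq_succ (n : ℕ) :
    ∑ k ∈ range (n + 1), (n + 1 - k) * ((n + 1).choose k ^ 2 * k !)
      = (n + 1) * (cardIS n + ∑ k ∈ range n, (n - k) * (n.choose k ^ 2 * k !)) := by
  rw [← sum_choose_mul_choose_succ_mul_factorial, mul_sum]
  refine sum_congr rfl fun k _ => ?_
  calc (n + 1 - k) * ((n + 1).choose k ^ 2 * k !)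
      = (n + 1).choose k * (n + 1 - k) * ((n + 1).choose k * k !) := by ring
    _ = (n + 1) * (n.choose k * ((n + 1).choose k * k !)) := by
      rw [← choose_mul_succ_eq]; ring

theorem stmt6_general (n : ℕ) :
    ∑ k ∈ Finset.range n, (n - k) * ((n.choose k) ^ 2 * k.factorial)
      = ∑ k ∈ Finset.Icc 1 n, n.descFactorial k * cardIS (n - k) := by
  induction n with
  | zero => simp
  | succ n ih => rw [sum_range_sub_mul_choose_sq_succ, sum_Icc_descFactorial_mul_cardIS_succ, ih]

theorem stmt6 (n : ℕ) (h : 1 ≤ n) :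
    ∑ k ∈ Finset.range n, (n - k) * ((n.choose k) ^ 2 * k.factorial)
      = ∑ k ∈ Finset.Icc 1 n, n.descFactorial k * cardIS (n - k) :=
  stmt6_general n
end

section
/- The total number of chains in the chain decompositions of all elements of IS_n equals the sum over all α in IS_n of the stable rank of α (the number of points lying in cycles of α). -/
/-- The stable rank of `α`: the number of points lying in cycles of `α`,
i.e. the points on which all powers of `α` are defined. -/
def stableRank (n : ℕ) (α : PInj n) : ℕ :=
  (Finset.univ.filter (fun x => iterMap n α.val n x ≠ none)).card

/-!
Both sides count pairs `(α, x)`: on the left those with `α x` undefined (every chain of `α` ends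
at exactly one such point), on the right those with `x` on a cycle of `α`. For fixed `x` the two
kinds of partial injections are in bijection: if `α x` is undefined, `x` ends a chain, and sending
`x` to the start of that chain closes it into a cycle through `x`; conversely, deleting the arrow
out of a cycle point `x` reopens its cycle into a chain ending at `x`.
-/

open Finset Function

section iterMap

variable {n : ℕ} (f : Fin n → Option (Fin n))

theorem iterMap_succ (k : ℕ) (x : Fin n) :
    iterMap n f (k + 1) x = (f x).bind (iterMap n f k) := rfl

theorem iterMap_add (a b : ℕ) (x : Fin n) :
    iterMap n f (a + b) x = (iterMap n f a x).bind (iterMap n f b) := by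
  induction a generalizing x with
  | zero => rw [Nat.zero_add]; rfl
  | succ a ih =>
    rw [Nat.add_right_comm, iterMap_succ, iterMap_succ]
    cases f x <;> simp [ih]

theorem iterMap_one : iterMap n f 1 = f :=
  funext fun y => by rw [iterMap_succ]; cases f y <;> rfl

theorem iterMap_succ' (k : ℕ) (x : Fin n) :
    iterMap n f (k + 1) x = (iterMap n f k x).bind f := by
  rw [iterMap_add, iterMap_one]

theorem iterMap_eq_none_of_le {a b : ℕ} (hab : a ≤ b) {x : Fin n}
    (h : iterMap n f a x = none) : iterMap n f b x = none := by
  obtain ⟨c, rfl⟩ := Nat.exists_eq_add_of_le hab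
  rw [iterMap_add, h]
  rfl

theorem iterMap_eq_none_of_apply_eq_none {x : Fin n} (hx : f x = none) {k : ℕ} (hk : 0 < k) :
    iterMap n f k x = none := by
  obtain _ | k := k
  · cases hk
  · rw [iterMap_succ, hx]
    rfl

theorem iterMap_mul_eq_self {L : ℕ} {x : Fin n} (h : iterMap n f L x = some x) (t : ℕ) :
    iterMap n f (L * t) x = some x := by
  induction t with
  | zero => rfl
  | succ t ih => rw [Nat.mul_succ, iterMap_add, ih, Option.bind_some, h]

theorem iterMap_ne_none_of_eq_self {L : ℕ} (hL : 0 < L) {x : Fin n}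
    (h : iterMap n f L x = some x) (m : ℕ) : iterMap n f m x ≠ none := fun hm => by
  have := iterMap_eq_none_of_le f (Nat.le_mul_of_pos_left m hL) hm
  rw [iterMap_mul_eq_self f h] at this
  cases this

theorem iterMap_update_of_forall_ne {j : ℕ} {a b : Fin n} (v : Option (Fin n))
    (h : ∀ i < j, iterMap n f i a ≠ some b) :
    iterMap n (update f b v) j a = iterMap n f j a := by
  induction j generalizing a with
  | zero => rfl
  | succ j ih =>
    have hab : a ≠ b := fun hab => h 0 j.succ_pos (by rw [hab]; rfl)
    rw [iterMap_succ, iterMap_succ, update_of_ne hab]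
    cases hfa : f a with
    | none => rfl
    | some c => exact ih fun i hi => by simpa [iterMap_succ, hfa] using h (i + 1) (by omega)

/-- Shortening the path to its first visit of `b`, the path avoids the modified arrow. -/
theorem exists_iterMap_update_eq_some {j : ℕ} {a b : Fin n} (h : iterMap n f j a = some b)
    (v : Option (Fin n)) : ∃ i, iterMap n (update f b v) i a = some b := by
  classical
  have hex : ∃ i, iterMap n f i a = some b := ⟨j, h⟩
  exact ⟨Nat.find hex, (iterMap_update_of_forall_ne f v fun i hi => Nat.find_min hex hi).trans
    (Nat.find_spec hex)⟩

theorem exists_iterMap_eq_some_apply_eq_none {m : ℕ} {x : Fin n} (h : iterMap n f m x = none) :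
    ∃ j s, iterMap n f j x = some s ∧ f s = none := by
  induction m generalizing x with
  | zero => cases h
  | succ m ih =>
    cases hx : f x with
    | none => exact ⟨0, x, rfl, hx⟩
    | some y =>
      rw [iterMap_succ, hx, Option.bind_some] at h
      obtain ⟨j, s, hj, hs⟩ := ih h
      exact ⟨j + 1, s, by rw [iterMap_succ, hx, Option.bind_some, hj], hs⟩

theorem eq_of_iterMap_eq_some_of_apply_eq_none {x s s' : Fin n} {j j' : ℕ}
    (h : iterMap n f j x = some s) (hs : f s = none)
    (h' : iterMap n f j' x = some s') (hs' : f s' = none) : s = s' := by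
  have le_of_apply_eq_none : ∀ {j j' s s'}, iterMap n f j x = some s → f s = none →
      iterMap n f j' x = some s' → j' ≤ j := fun h hs h' => by
    by_contra hlt
    have hnone := iterMap_eq_none_of_le f (not_le.mp hlt) (by rw [iterMap_succ', h]; exact hs)
    rw [h'] at hnone
    cases hnone
  obtain rfl := le_antisymm (le_of_apply_eq_none h' hs' h) (le_of_apply_eq_none h hs h')
  exact Option.some_injective _ (h.symm.trans h')

end iterMap

section pinv

variable {n : ℕ} {f : Fin n → Option (Fin n)}

open Classical in
noncomputable def pinv (f : Fin n → Option (Fin n)) (y : Fin n) : Option (Fin n) :=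
  if h : ∃ a, f a = some y then some h.choose else none

theorem apply_eq_some_of_pinv_eq_some {y a : Fin n} (h : pinv f y = some a) : f a = some y := by
  unfold pinv at h
  split_ifs at h with hex
  cases h
  exact hex.choose_spec

theorem pinv_eq_some_iff (hf : IsPInj n f) {y a : Fin n} : pinv f y = some a ↔ f a = some y := by
  refine ⟨apply_eq_some_of_pinv_eq_some, fun ha => ?_⟩
  have hex : ∃ a, f a = some y := ⟨a, ha⟩
  rw [pinv, dif_pos hex, hf _ _ _ hex.choose_spec ha]

theorem pinv_eq_none_iff {y : Fin n} : pinv f y = none ↔ ∀ a, f a ≠ some y := by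
  unfold pinv
  split_ifs with hex
  · simpa using hex
  · simpa using hex

theorem isPInj_pinv (f : Fin n → Option (Fin n)) : IsPInj n (pinv f) := fun _ _ _ ha hb =>
  Option.some_injective _
    ((apply_eq_some_of_pinv_eq_some ha).symm.trans (apply_eq_some_of_pinv_eq_some hb))

theorem iterMap_pinv_eq_some_iff (hf : IsPInj n f) {j : ℕ} {x a : Fin n} :
    iterMap n (pinv f) j x = some a ↔ iterMap n f j a = some x := by
  induction j generalizing x with
  | zero => exact eq_comm
  | succ j ih =>
    rw [iterMap_succ, iterMap_succ', Option.bind_eq_some_iff, Option.bind_eq_some_iff]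
    simp only [pinv_eq_some_iff hf, ih]
    exact exists_congr fun _ => and_comm

theorem isPInj_iterMap (hf : IsPInj n f) (k : ℕ) : IsPInj n (iterMap n f k) :=
  fun _ _ _ ha hb => Option.some_injective _
    (((iterMap_pinv_eq_some_iff hf).2 ha).symm.trans ((iterMap_pinv_eq_some_iff hf).2 hb))

end pinv

namespace IsPInj

variable {n : ℕ} {f : Fin n → Option (Fin n)}

theorem update_none (hf : IsPInj n f) (x : Fin n) : IsPInj n (update f x none) := by
  intro a b c ha hb
  rcases eq_or_ne a x with rfl | hax
  · simp at ha
  rcases eq_or_ne b x with rfl | hbx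
  · simp at hb
  rw [update_of_ne hax] at ha
  rw [update_of_ne hbx] at hb
  exact hf a b c ha hb

theorem update_some (hf : IsPInj n f) {s : Fin n} (hs : ∀ a, f a ≠ some s) (x : Fin n) :
    IsPInj n (update f x (some s)) := by
  intro a b c ha hb
  simp only [update_apply] at ha hb
  split_ifs at ha hb with hax hbx hbx
  · rw [hax, hbx]
  · cases ha
    exact absurd hb (hs b)
  · cases hb
    exact absurd ha (hs a)
  · exact hf a b c ha hb

/-- Pigeonhole on `x, f x, …, fⁿ x`; injectivity of the powers of `f` cancels the common prefix. -/
theorem exists_iterMap_eq_self (hf : IsPInj n f) {x : Fin n} (h : iterMap n f n x ≠ none) :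
    ∃ L, 0 < L ∧ iterMap n f L x = some x := by
  have hdef : ∀ j ≤ n, iterMap n f j x = some ((iterMap n f j x).getD x) := fun j hj => by
    cases hj' : iterMap n f j x
    · exact absurd (iterMap_eq_none_of_le f hj hj') h
    · rfl
  have of_lt : ∀ i j, i < j → j ≤ n → (iterMap n f i x).getD x = (iterMap n f j x).getD x →
      ∃ L, 0 < L ∧ iterMap n f L x = some x := fun i j hij hj heq => by
    have hj' := hdef j hj
    rw [← heq, ← Nat.sub_add_cancel hij.le, iterMap_add, Option.bind_eq_some_iff] at hj'
    obtain ⟨z, hz, hzi⟩ := hj'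
    exact ⟨j - i, Nat.sub_pos_of_lt hij, isPInj_iterMap hf i z x _ hzi (hdef i (by omega)) ▸ hz⟩
  obtain ⟨i, hi, j, hj, hij, heq⟩ := exists_ne_map_eq_of_card_lt_of_maps_to
    (s := range (n + 1)) (t := (univ : Finset (Fin n))) (by simp)
    (f := fun j => (iterMap n f j x).getD x) (fun _ _ => mem_coe.2 (mem_univ _))
  rw [mem_range] at hi hj
  rcases hij.lt_or_gt with hlt | hlt
  · exact of_lt i j hlt (by omega) heq
  · exact of_lt j i hlt (by omega) heq.symm

/-- The backward orbit of a chain end cannot cycle, since a cycle of `pinv f` is one of `f`. -/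
theorem iterMap_pinv_eq_none (hf : IsPInj n f) {x : Fin n} (hx : f x = none) :
    iterMap n (pinv f) n x = none := by
  by_contra h
  obtain ⟨L, hL, hLx⟩ := (isPInj_pinv f).exists_iterMap_eq_self h
  rw [iterMap_pinv_eq_some_iff hf, iterMap_eq_none_of_apply_eq_none f hx hL] at hLx
  cases hLx

theorem exists_chainStart (hf : IsPInj n f) {x : Fin n} (hx : f x = none) :
    ∃ s, (∃ j, iterMap n f j s = some x) ∧ ∀ a, f a ≠ some s := by
  obtain ⟨j, s, hj, hs⟩ := exists_iterMap_eq_some_apply_eq_none _ (hf.iterMap_pinv_eq_none hx)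
  exact ⟨s, ⟨j, (iterMap_pinv_eq_some_iff hf).1 hj⟩, pinv_eq_none_iff.1 hs⟩

end IsPInj

section chainStart

variable {n : ℕ} {f : Fin n → Option (Fin n)}

noncomputable def chainStart (hf : IsPInj n f) {x : Fin n} (hx : f x = none) : Fin n :=
  (hf.exists_chainStart hx).choose

theorem chainStart_spec (hf : IsPInj n f) {x : Fin n} (hx : f x = none) :
    (∃ j, iterMap n f j (chainStart hf hx) = some x) ∧ ∀ a, f a ≠ some (chainStart hf hx) :=
  (hf.exists_chainStart hx).choose_spec

theorem chainStart_eq (hf : IsPInj n f) {x : Fin n} (hx : f x = none) {s : Fin n} {j : ℕ}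
    (hs : iterMap n f j s = some x) (hpre : ∀ a, f a ≠ some s) : chainStart hf hx = s := by
  obtain ⟨⟨i, hi⟩, hpre'⟩ := chainStart_spec hf hx
  exact eq_of_iterMap_eq_some_of_apply_eq_none _
    ((iterMap_pinv_eq_some_iff hf).2 hi) (pinv_eq_none_iff.2 hpre')
    ((iterMap_pinv_eq_some_iff hf).2 hs) (pinv_eq_none_iff.2 hpre)

end chainStart

namespace PInj

variable {n : ℕ}

noncomputable def closeAt (x : Fin n) (α : PInj n) (hx : α.val x = none) : PInj n :=
  ⟨update α.val x (some (chainStart α.2 hx)), α.2.update_some (chainStart_spec α.2 hx).2 x⟩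

def openAt (x : Fin n) (β : PInj n) : PInj n :=
  ⟨update β.val x none, β.2.update_none x⟩

@[simp]
theorem closeAt_val (x : Fin n) (α : PInj n) (hx : α.val x = none) :
    (closeAt x α hx).val = update α.val x (some (chainStart α.2 hx)) := rfl

@[simp]
theorem openAt_val (x : Fin n) (β : PInj n) : (openAt x β).val = update β.val x none := rfl

theorem openAt_apply_self (x : Fin n) (β : PInj n) : (openAt x β).val x = none :=
  update_self ..

theorem iterMap_closeAt_ne_none (x : Fin n) (α : PInj n) (hx : α.val x = none) (m : ℕ) :
    iterMap n (closeAt x α hx).val m x ≠ none := by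
  obtain ⟨⟨j, hj⟩, -⟩ := chainStart_spec α.2 hx
  obtain ⟨i, hi⟩ := exists_iterMap_update_eq_some α.val hj (some (chainStart α.2 hx))
  refine iterMap_ne_none_of_eq_self _ i.succ_pos ?_ m
  rw [closeAt_val, iterMap_succ, update_self, Option.bind_some]
  exact hi

theorem openAt_closeAt (x : Fin n) (α : PInj n) (hx : α.val x = none) :
    openAt x (closeAt x α hx) = α :=
  Subtype.ext <| by rw [openAt_val, closeAt_val, update_idem, ← hx, update_eq_self]

theorem closeAt_openAt (x : Fin n) (β : PInj n) (hβ : iterMap n β.val n x ≠ none) :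
    closeAt x (openAt x β) (openAt_apply_self x β) = β := by
  obtain ⟨L, hL, hLx⟩ := β.2.exists_iterMap_eq_self hβ
  obtain ⟨L, rfl⟩ : ∃ k, L = k + 1 := ⟨L - 1, by omega⟩
  rw [iterMap_succ, Option.bind_eq_some_iff] at hLx
  obtain ⟨c, hc, hcx⟩ := hLx
  obtain ⟨i, hi⟩ := exists_iterMap_update_eq_some β.val hcx none
  have hpre : ∀ a, (openAt x β).val a ≠ some c := fun a ha => by
    rcases eq_or_ne a x with rfl | hax
    · rw [openAt_apply_self] at ha
      cases ha
    · rw [openAt_val, update_of_ne hax] at ha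
      exact hax (β.2 a x c ha hc)
  have hstart : chainStart (openAt x β).2 (openAt_apply_self x β) = c := chainStart_eq _ _ hi hpre
  apply Subtype.ext
  rw [closeAt_val, hstart, openAt_val, update_idem, ← hc, update_eq_self]

theorem card_apply_eq_none_eq_card_iterMap_ne_none (x : Fin n) :
    #{α : PInj n | α.val x = none} = #{β : PInj n | iterMap n β.val n x ≠ none} :=
  card_bij' (fun α hα => closeAt x α (mem_filter.1 hα).2) (fun β _ => openAt x β)
    (fun α _ => mem_filter.2 ⟨mem_univ _, iterMap_closeAt_ne_none x α _ n⟩)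
    (fun β _ => mem_filter.2 ⟨mem_univ _, openAt_apply_self x β⟩)
    (fun α _ => openAt_closeAt x α _)
    (fun β hβ => closeAt_openAt x β (mem_filter.1 hβ).2)

theorem sub_domCard_eq_card_apply_eq_none (α : PInj n) :
    n - domCard n α = #{x | α.val x = none} := by
  have := card_filter_add_card_filter_not (s := univ) (fun x : Fin n => α.val x ≠ none)
  simp only [not_not, card_univ, Fintype.card_fin] at this
  rw [domCard]
  omega

end PInj

open PInj in
theorem stmt8 (n : ℕ) :
    ∑ α : PInj n, (n - domCard n α) = ∑ α : PInj n, stableRank n α := by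
  simp only [sub_domCard_eq_card_apply_eq_none, stableRank]
  calc ∑ α : PInj n, #{x | α.val x = none}
      = ∑ x : Fin n, #{α : PInj n | α.val x = none} :=
        sum_card_bipartiteAbove_eq_sum_card_bipartiteBelow (s := univ) (t := univ)
          fun (α : PInj n) x => α.val x = none
    _ = ∑ x : Fin n, #{β : PInj n | iterMap n β.val n x ≠ none} := by
        simp only [card_apply_eq_none_eq_card_iterMap_ne_none]
    _ = ∑ β : PInj n, #{x | iterMap n β.val n x ≠ none} :=
        (sum_card_bipartiteAbove_eq_sum_card_bipartiteBelow (s := univ) (t := univ)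
          fun (β : PInj n) x => iterMap n β.val n x ≠ none).symm
end

section
/- Let P_n be the total number of fixed points over all elements of IS_n, and L_n the total number of chains over all elements of IS_n. Then P_n + L_n/n = |IS_n|. -/
/-- Number of fixed points of `α`. -/
def fixCard (n : ℕ) (α : PInj n) : ℕ :=
  (Finset.univ.filter (fun x => α.val x = some x)).card

namespace PInj

variable {n : ℕ}

def postcomp (σ : Equiv.Perm (Fin n)) (α : PInj n) : PInj n :=
  ⟨fun z => (α.val z).map σ, fun a b c ha hb => by
    obtain ⟨a', ha', rfl⟩ := Option.map_eq_some_iff.mp ha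
    obtain ⟨b', hb', hab⟩ := Option.map_eq_some_iff.mp hb
    exact α.prop a b a' ha' (σ.injective hab ▸ hb')⟩

@[simp]
lemma postcomp_apply (σ : Equiv.Perm (Fin n)) (α : PInj n) (z : Fin n) :
    (postcomp σ α).val z = (α.val z).map σ := rfl

lemma postcomp_swap_involutive (x y : Fin n) : Function.Involutive (postcomp (Equiv.swap x y)) :=
  fun α => Subtype.ext <| funext fun z => by
    cases hz : α.val z <;> simp [postcomp, hz, Equiv.swap_apply_self]

end PInj

open Finset PInj

lemma sum_card_filter_eq_card_filter_prod {α β : Type*} [Fintype α] [Fintype β]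
    (p : α → β → Prop) [∀ a b, Decidable (p a b)] :
    ∑ a, #{b | p a b} = #{q : α × β | p q.1 q.2} := by
  simp only [card_filter, ← univ_product_univ, sum_product]

lemma card_mem_dom_eq_card_isFixedPt_mul (n : ℕ) :
    #{q : PInj n × Fin n | q.1.val q.2 ≠ none}
      = #{q : PInj n × Fin n | q.1.val q.2 = some q.2} * n := by
  suffices #{q : PInj n × Fin n | q.1.val q.2 ≠ none}
      = #(({q : PInj n × Fin n | q.1.val q.2 = some q.2} : Finset _) ×ˢ (univ : Finset (Fin n))) by
    rwa [card_product, card_univ, Fintype.card_fin] at this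
  apply card_bij'
    (i := fun (q : PInj n × Fin n) _ =>
      ((postcomp (Equiv.swap q.2 ((q.1.val q.2).getD q.2)) q.1, q.2), (q.1.val q.2).getD q.2))
    (j := fun (q : (PInj n × Fin n) × Fin n) _ => (postcomp (Equiv.swap q.1.2 q.2) q.1.1, q.1.2))
  all_goals simp only [mem_filter, mem_product, mem_univ, true_and, and_true]
  · rintro ⟨α, x⟩ (hx : α.val x ≠ none)
    obtain ⟨y, hy⟩ := Option.ne_none_iff_exists'.mp hx
    simp [hy]
  · rintro ⟨⟨β, x⟩, y⟩ hx
    simp_all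
  · rintro ⟨α, x⟩ (hx : α.val x ≠ none)
    obtain ⟨y, hy⟩ := Option.ne_none_iff_exists'.mp hx
    simp [hy, postcomp_swap_involutive _ _ α]
  · rintro ⟨⟨β, x⟩, y⟩ hx
    simp_all [postcomp_swap_involutive _ _ β]

lemma sum_domCard_eq_sum_fixCard_mul (n : ℕ) :
    ∑ α : PInj n, domCard n α = (∑ α : PInj n, fixCard n α) * n := by
  simp only [domCard, fixCard, sum_card_filter_eq_card_filter_prod]
  exact card_mem_dom_eq_card_isFixedPt_mul n

lemma domCard_le (n : ℕ) (α : PInj n) : domCard n α ≤ n :=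
  (card_filter_le _ _).trans (card_univ.trans (Fintype.card_fin n)).le

theorem stmt9 (n : ℕ) (h : 0 < n) :
    ((∑ α : PInj n, fixCard n α : ℕ) : ℚ)
        + ((∑ α : PInj n, (n - domCard n α) : ℕ) : ℚ) / (n : ℚ)
      = (Nat.card (PInj n) : ℚ) := by
  have hn : (n : ℚ) ≠ 0 := by exact_mod_cast h.ne'
  have hdom : ∑ α : PInj n, (domCard n α : ℚ) = (∑ α : PInj n, (fixCard n α : ℚ)) * n := by
    exact_mod_cast sum_domCard_eq_sum_fixCard_mul n
  have hchains : ((∑ α : PInj n, (n - domCard n α) : ℕ) : ℚ)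
      = n * Nat.card (PInj n) - ∑ α : PInj n, (domCard n α : ℚ) := by
    simp only [Nat.cast_sum, Nat.cast_sub (domCard_le n _), sum_sub_distrib, sum_const,
      card_univ, Nat.card_eq_fintype_card, nsmul_eq_mul, mul_comm]
  rw [Nat.cast_sum, hchains, hdom]
  field_simp
  ring
end

section
/- The sum over all α in IS_n of the length of the orbit of the point 1 under α equals the total number of chains in the chain decompositions of all elements of IS_n. -/
/-- Length of the orbit `{x, α(x), α²(x), …}` of `x` under `α`
(empty if `x ∉ dom α`). -/
def orbitLen (n : ℕ) (α : PInj n) (x : Fin n) : ℕ :=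
  if α.val x = none then 0
  else (Finset.univ.filter (fun y => ∃ i < n, iterMap n α.val i x = some y)).card

/-!
For a partial injection `α` and a point `x`, cut the edge of `α` that enters `x`. The path of
the cut map from `x` runs through the orbit of `x` without repetition, so the orbit length of
`x`, plus one if `x ∉ dom α`, is the number of `k` for which the `k`-th step of this path is
defined. Contracting the first edge `x ↦ x₁` of the path is a bijection onto the partial
injections of the remaining `n - 1` points and shortens the path by one step; hence exactly
`(n-1)_k |IS_{n-k}|` elements of `IS_n` have a path of length `k`. The same contraction, and
deleting `x` when it is isolated, give `|IS_{n+1}| = u_{n+1} + (n+1) |IS_n|` and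
`u_{n+1} = |IS_n| + n u_n`, where `u_n` counts the `α ∈ IS_n` undefined at `x`. By induction
`∑_{k<n} (n-1)_k |IS_{n-k}| = (n+1) u_n`, so the left-hand side is `n u_n`, which is also the
number of pairs `(α, y)` with `y ∉ dom α`.
-/

open Finset

section OptionSubtype

variable {γ : Type*}

lemma map_val_ne_some {x : γ} (o : Option {y // y ≠ x}) : o.map Subtype.val ≠ some x := by
  cases o with
  | none => simp
  | some z => simpa using z.2

variable [DecidableEq γ]

lemma bind_optionSubtypeNe_symm_eq_some {x : γ} {o : Option γ} {c : {y // y ≠ x}} :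
    o.bind (Equiv.optionSubtypeNe x).symm = some c ↔ o = some c.1 := by
  cases o with
  | none => simp
  | some z =>
    by_cases hz : z = x
    · subst hz; simp [c.2.symm]
    · simp [Subtype.ext_iff, hz]

lemma map_val_bind_optionSubtypeNe_symm {x : γ} {o : Option γ} (h : o ≠ some x) :
    (o.bind (Equiv.optionSubtypeNe x).symm).map Subtype.val = o := by
  cases o with
  | none => rfl
  | some z =>
    have hz : z ≠ x := fun hz => h (hz ▸ rfl)
    simp only [Option.bind_some, Equiv.optionSubtypeNe_symm_of_ne hz, Option.map_some]

lemma swap_apply_ne_right_of_ne_left {x₀ x₁ y : γ} (hy : y ≠ x₀) : Equiv.swap x₀ x₁ y ≠ x₁ := by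
  simpa [Equiv.swap_apply_eq_iff] using hy

lemma card_subtype_ne_of_card_eq [Fintype γ] {m : ℕ} (h : Fintype.card γ = m + 1) (x : γ) :
    Fintype.card {y // y ≠ x} = m := by
  simp [Fintype.card_subtype_compl, h]

end OptionSubtype

def IsInjOnDom {γ : Type*} (f : γ → Option γ) : Prop :=
  ∀ ⦃a b c⦄, f a = some c → f b = some c → a = b

structure PartialInj_s10 (γ : Type*) where
  toFun : γ → Option γ
  injOnDom : IsInjOnDom toFun

namespace PartialInj_s10

variable {γ δ : Type*}

instance : CoeFun (PartialInj_s10 γ) (fun _ => γ → Option γ) := ⟨toFun⟩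

@[ext] lemma ext {α β : PartialInj_s10 γ} (h : ∀ x, α x = β x) : α = β := by
  cases α; cases β; congr; exact funext h

lemma inj (α : PartialInj_s10 γ) {a b c : γ} (ha : α a = some c) (hb : α b = some c) : a = b :=
  α.injOnDom ha hb

def equivSubtype : PartialInj_s10 γ ≃ {f : γ → Option γ // IsInjOnDom f} where
  toFun α := ⟨α, α.injOnDom⟩
  invFun f := ⟨f.1, f.2⟩

instance [Fintype γ] [DecidableEq γ] : Fintype (PartialInj_s10 γ) :=
  haveI : DecidablePred (@IsInjOnDom γ) := fun _ =>
    inferInstanceAs (Decidable (∀ _ _ _, _ → _ → _))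
  Fintype.ofEquiv _ equivSubtype.symm

def conj (e : γ ≃ δ) (α : PartialInj_s10 γ) : PartialInj_s10 δ :=
  ⟨fun y => (α (e.symm y)).map e, fun a b c ha hb => by
    obtain ⟨a', ha', rfl⟩ := Option.map_eq_some_iff.mp ha
    obtain ⟨b', hb', hab⟩ := Option.map_eq_some_iff.mp hb
    rw [e.injective hab] at hb'
    exact e.symm.injective (α.inj hb' ha').symm⟩

def congr_s10 (e : γ ≃ δ) : PartialInj_s10 γ ≃ PartialInj_s10 δ where
  toFun := conj e
  invFun := conj e.symm
  left_inv α := by ext x; simp [conj, Option.map_map, Function.comp_def]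
  right_inv β := by ext y; simp [conj, Option.map_map, Function.comp_def]

def count (m : ℕ) : ℕ := Fintype.card (PartialInj_s10 (Fin m))

lemma card_eq_count [Fintype γ] [DecidableEq γ] {m : ℕ} (h : Fintype.card γ = m) :
    Fintype.card (PartialInj_s10 γ) = count m :=
  Fintype.card_congr (congr_s10 (Fintype.equivFinOfCardEq h))

section Contract

variable [DecidableEq γ] {x₀ x₁ : γ}

/-- Drop the edge `x₀ ↦ x₁` and let `x₀` take over the outgoing edge of `x₁`; on the domain
this is precomposition with the transposition `(x₀ x₁)`. -/
def contractFun (α : {α : PartialInj_s10 γ // α x₀ = some x₁}) : PartialInj_s10 {y // y ≠ x₁} :=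
  ⟨fun y => (α.1 (Equiv.swap x₀ x₁ y)).bind (Equiv.optionSubtypeNe x₁).symm,
    fun a b c ha hb => by
      rw [bind_optionSubtypeNe_symm_eq_some] at ha hb
      exact Subtype.ext ((Equiv.swap x₀ x₁).injective (α.1.inj ha hb))⟩

lemma map_val_contractFun (α : {α : PartialInj_s10 γ // α x₀ = some x₁}) (y : {y // y ≠ x₁}) :
    (contractFun α y).map Subtype.val = α.1 (Equiv.swap x₀ x₁ y) := by
  refine map_val_bind_optionSubtypeNe_symm fun h => y.2 ?_
  simpa [Equiv.swap_apply_eq_iff] using α.1.inj h α.2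

def expandFun (β : PartialInj_s10 {y // y ≠ x₁}) : {α : PartialInj_s10 γ // α x₀ = some x₁} :=
  ⟨⟨fun y => if h : y = x₀ then some x₁
      else (β ⟨Equiv.swap x₀ x₁ y, swap_apply_ne_right_of_ne_left h⟩).map Subtype.val,
    fun a b c ha hb => by
      by_cases ha₀ : a = x₀ <;> by_cases hb₀ : b = x₀ <;>
        simp only [ha₀, hb₀, dite_true, dite_false] at ha hb
      · exact ha₀.trans hb₀.symm
      · exact absurd (hb.trans ha.symm) (map_val_ne_some _)
      · exact absurd (ha.trans hb.symm) (map_val_ne_some _)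
      · obtain ⟨c', hc', rfl⟩ := Option.map_eq_some_iff.mp ha
        obtain ⟨d', hd', hdc⟩ := Option.map_eq_some_iff.mp hb
        rw [Subtype.val_injective hdc] at hd'
        exact (Equiv.swap x₀ x₁).injective (congrArg Subtype.val (β.inj hc' hd'))⟩, dif_pos rfl⟩

variable (x₀ x₁) in
def contract : {α : PartialInj_s10 γ // α x₀ = some x₁} ≃ PartialInj_s10 {y // y ≠ x₁} where
  toFun := contractFun
  invFun := expandFun
  left_inv α := by
    refine Subtype.ext (ext fun y => ?_)
    by_cases hy : y = x₀
    · simp [expandFun, hy, α.2]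
    · simp only [expandFun, dif_neg hy]
      rw [map_val_contractFun]
      simp
  right_inv β := by
    refine ext fun y => Option.map_injective Subtype.val_injective ?_
    rw [map_val_contractFun]
    have hy : Equiv.swap x₀ x₁ y ≠ x₀ := by simpa [Equiv.swap_apply_eq_iff] using y.2
    simp [expandFun, hy]

lemma map_val_contract (α : {α : PartialInj_s10 γ // α x₀ = some x₁}) (y : {y // y ≠ x₁}) :
    (contract x₀ x₁ α y).map Subtype.val = α.1 (Equiv.swap x₀ x₁ y) :=
  map_val_contractFun α y

end Contract

section Isolate

variable [DecidableEq γ] {x₀ : γ}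

def restrictFun (α : {α : PartialInj_s10 γ // α x₀ = none ∧ ∀ y, α y ≠ some x₀}) :
    PartialInj_s10 {y // y ≠ x₀} :=
  ⟨fun y => (α.1 y).bind (Equiv.optionSubtypeNe x₀).symm, fun a b c ha hb => by
    rw [bind_optionSubtypeNe_symm_eq_some] at ha hb
    exact Subtype.ext (α.1.inj ha hb)⟩

def extendFun (β : PartialInj_s10 {y // y ≠ x₀}) :
    {α : PartialInj_s10 γ // α x₀ = none ∧ ∀ y, α y ≠ some x₀} :=
  ⟨⟨fun y => if h : y = x₀ then none else (β ⟨y, h⟩).map Subtype.val,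
    fun a b c ha hb => by
      by_cases ha₀ : a = x₀ <;> by_cases hb₀ : b = x₀ <;>
        simp only [ha₀, hb₀, dite_true, dite_false, reduceCtorEq] at ha hb
      obtain ⟨c', hc', rfl⟩ := Option.map_eq_some_iff.mp ha
      obtain ⟨d', hd', hdc⟩ := Option.map_eq_some_iff.mp hb
      rw [Subtype.val_injective hdc] at hd'
      exact congrArg Subtype.val (β.inj hc' hd')⟩,
    dif_pos rfl, fun y => by
      by_cases hy : y = x₀
      · simp [hy]
      · simpa [hy] using map_val_ne_some (β ⟨y, hy⟩)⟩

variable (x₀) in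
def isolate :
    {α : PartialInj_s10 γ // α x₀ = none ∧ ∀ y, α y ≠ some x₀} ≃ PartialInj_s10 {y // y ≠ x₀} where
  toFun := restrictFun
  invFun := extendFun
  left_inv α := by
    refine Subtype.ext (ext fun y => ?_)
    by_cases hy : y = x₀
    · simp [extendFun, hy, α.2.1]
    · simp only [extendFun, dif_neg hy, restrictFun]
      exact map_val_bind_optionSubtypeNe_symm (α.2.2 y)
  right_inv β := by
    refine ext fun y => Option.map_injective Subtype.val_injective ?_
    simp only [restrictFun]
    rw [map_val_bind_optionSubtypeNe_symm ((extendFun β).2.2 y)]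
    simp [extendFun, y.2]

end Isolate

section Count

variable [DecidableEq γ] [Fintype γ] {m : ℕ}

lemma card_apply_eq_some (h : Fintype.card γ = m + 1) (x₀ x₁ : γ) :
    Fintype.card {α : PartialInj_s10 γ // α x₀ = some x₁} = count m :=
  (Fintype.card_congr (contract x₀ x₁)).trans
    (card_eq_count (card_subtype_ne_of_card_eq h x₁))

lemma card_eq_sum_card_apply_eq (P : PartialInj_s10 γ → Prop) [DecidablePred P] (x₀ : γ) :
    Fintype.card {α // P α} = ∑ o : Option γ, Fintype.card {α // P α ∧ α x₀ = o} := by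
  rw [← Fintype.card_congr (Equiv.sigmaFiberEquiv fun α : {α // P α} => α.1 x₀),
    Fintype.card_sigma]
  exact Finset.sum_congr rfl fun o _ =>
    Fintype.card_congr (Equiv.subtypeSubtypeEquivSubtypeInter _ fun α : PartialInj_s10 γ => α x₀ = o)

lemma card_apply_eq_none_add (h : Fintype.card γ = m + 1) (x₀ : γ) :
    Fintype.card {α : PartialInj_s10 γ // α x₀ = none} + (m + 1) * count m = count (m + 1) := by
  rw [← card_eq_count h, ← Fintype.card_congr (Equiv.sigmaFiberEquiv fun α : PartialInj_s10 γ => α x₀),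
    Fintype.card_sigma, Fintype.sum_option]
  simp [card_apply_eq_some h, h]

/-- The number `u_{m+1}` above (note the shift of index). -/
def countUndef (m : ℕ) : ℕ := Fintype.card {α : PartialInj_s10 (Fin (m + 1)) // α 0 = none}

lemma card_apply_eq_none (h : Fintype.card γ = m + 1) (x₀ : γ) :
    Fintype.card {α : PartialInj_s10 γ // α x₀ = none} = countUndef m := by
  have h₁ := card_apply_eq_none_add h x₀
  have h₂ := card_apply_eq_none_add (Fintype.card_fin (m + 1)) 0
  rw [countUndef]
  omega

lemma count_succ (m : ℕ) : count (m + 1) = countUndef m + (m + 1) * count m :=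
  (card_apply_eq_none_add (Fintype.card_fin (m + 1)) 0).symm

lemma card_eq_card_forall_ne_add_sum (P : PartialInj_s10 γ → Prop) [DecidablePred P] (x₀ : γ) :
    Fintype.card {α // P α} = Fintype.card {α // P α ∧ ∀ y, α y ≠ some x₀}
      + ∑ y, Fintype.card {α // P α ∧ α y = some x₀} := by
  simp only [Fintype.card_subtype, card_filter]
  rw [Finset.sum_comm, ← Finset.sum_add_distrib]
  refine Finset.sum_congr rfl fun α _ => ?_
  by_cases hP : P α
  · by_cases hx : ∀ y, α y ≠ some x₀
    · simp [hP, hx]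
    · obtain ⟨y₀, hy₀⟩ := not_forall_not.mp hx
      rw [Finset.sum_eq_single y₀ (fun y _ hy => if_neg fun h => hy (α.inj h.2 hy₀))
        (by simp)]
      simpa [hP, hy₀] using ⟨y₀, hy₀⟩
  · simp [hP]

lemma card_apply_eq_none_eq_add_sum (h : Fintype.card γ = m + 1) (x₀ : γ) :
    Fintype.card {α : PartialInj_s10 γ // α x₀ = none} = count m
      + ∑ y : {y // y ≠ x₀}, Fintype.card {β : PartialInj_s10 {z // z ≠ x₀} // β y = none} := by
  rw [card_eq_card_forall_ne_add_sum _ x₀, Fintype.sum_eq_add_sum_subtype_ne _ x₀,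
    Fintype.card_congr (isolate x₀), card_eq_count (card_subtype_ne_of_card_eq h x₀)]
  have hx₀ : Fintype.card {α : PartialInj_s10 γ // α x₀ = none ∧ α x₀ = some x₀} = 0 :=
    Fintype.card_eq_zero_iff.mpr ⟨fun α => nomatch α.2.1.symm.trans α.2.2⟩
  rw [hx₀, zero_add]
  refine congrArg _ (Finset.sum_congr rfl fun y _ => Fintype.card_congr ?_)
  refine (Equiv.subtypeEquivRight fun α => and_comm).trans
    ((Equiv.subtypeSubtypeEquivSubtypeInter _ _).symm.trans
      (Equiv.subtypeEquiv (contract y.1 x₀) fun α => ?_))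
  rw [← Option.map_eq_none_iff (f := Subtype.val), map_val_contract, Equiv.swap_apply_left]

end Count

lemma countUndef_zero : countUndef 0 = count 0 := by
  rw [countUndef, card_apply_eq_none_eq_add_sum (Fintype.card_fin 1) 0]
  simp [Fin.forall_fin_one]

lemma countUndef_succ (m : ℕ) : countUndef (m + 1) = count (m + 1) + (m + 1) * countUndef m := by
  rw [countUndef, card_apply_eq_none_eq_add_sum (Fintype.card_fin (m + 2)) 0]
  simp [card_apply_eq_none (card_subtype_ne_of_card_eq (Fintype.card_fin (m + 2)) 0)]

lemma sum_descFactorial_mul_count (m : ℕ) :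
    ∑ k ∈ range (m + 1), m.descFactorial k * count (m + 1 - k) = (m + 2) * countUndef m := by
  induction m with
  | zero => rw [sum_range_one, Nat.descFactorial_zero, one_mul, count_succ, countUndef_zero]; ring
  | succ m ih =>
    rw [sum_range_succ', Nat.descFactorial_zero, Nat.sub_zero, count_succ (m + 1),
      countUndef_succ]
    simp only [Nat.succ_descFactorial_succ, Nat.add_sub_add_right, mul_assoc, ← mul_sum, ih]
    ring

end PartialInj_s10

section Path

variable {γ δ : Type*}

lemma map_iterate_bind_of_semiconj {g : δ → Option δ} {f : γ → Option γ} {φ : δ → γ}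
    (h : ∀ y, (g y).map φ = f (φ y)) (k : ℕ) (o : Option δ) :
    ((fun o => o.bind g)^[k] o).map φ = (fun o => o.bind f)^[k] (o.map φ) := by
  refine Function.Semiconj.iterate_right (fun o => ?_) k o
  cases o <;> simp [h]

lemma iterate_bind_eq_some_of_le {f g : γ → Option γ}
    (hgf : ∀ y z, g y = some z → f y = some z) (k : ℕ) {o : Option γ} {z : γ}
    (h : (fun o => o.bind g)^[k] o = some z) : (fun o => o.bind f)^[k] o = some z := by
  induction k generalizing z with
  | zero => exact h
  | succ k ih =>
    rw [Function.iterate_succ_apply'] at h ⊢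
    obtain ⟨w, hw, hwz⟩ := Option.bind_eq_some_iff.mp h
    rw [ih hw]
    exact hgf w z hwz

variable [DecidableEq γ]

def cutAt (f : γ → Option γ) (x : γ) : γ → Option γ :=
  fun y => if f y = some x then none else f y

/-- The `k`-th point of the `f`-path from `x`, cut off before it returns to `x`. -/
def pathFrom (f : γ → Option γ) (x : γ) (k : ℕ) : Option γ :=
  (fun o => o.bind (cutAt f x))^[k] (some x)

@[simp] lemma pathFrom_zero (f : γ → Option γ) (x : γ) : pathFrom f x 0 = some x := rfl

lemma pathFrom_succ (f : γ → Option γ) (x : γ) (k : ℕ) :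
    pathFrom f x (k + 1) = (fun o => o.bind (cutAt f x))^[k] (cutAt f x x) :=
  Function.iterate_succ_apply _ _ _

lemma pathFrom_succ_eq_none {f : γ → Option γ} {x : γ} (h : cutAt f x x = none) (k : ℕ) :
    pathFrom f x (k + 1) = none := by
  rw [pathFrom_succ, h]
  exact Function.iterate_fixed rfl k

lemma cutAt_eq_some {f : γ → Option γ} {x y z : γ} (h : cutAt f x y = some z) :
    f y = some z ∧ z ≠ x := by
  unfold cutAt at h
  split_ifs at h with hx
  exact ⟨h, fun hz => hx (hz ▸ h)⟩

lemma pathFrom_succ_eq_some {f : γ → Option γ} {x y : γ} {k : ℕ}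
    (h : pathFrom f x (k + 1) = some y) :
    ∃ w, pathFrom f x k = some w ∧ f w = some y ∧ y ≠ x := by
  rw [pathFrom, Function.iterate_succ_apply', ← pathFrom] at h
  obtain ⟨w, hw, hwy⟩ := Option.bind_eq_some_iff.mp h
  exact ⟨w, hw, cutAt_eq_some hwy⟩

lemma iterate_bind_eq_of_pathFrom_eq_some {f : γ → Option γ} {x y : γ} {k : ℕ}
    (h : pathFrom f x k = some y) : (fun o => o.bind f)^[k] (some x) = some y :=
  iterate_bind_eq_some_of_le (fun _ _ h => (cutAt_eq_some h).1) k h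

lemma exists_pathFrom_eq_some {f : γ → Option γ} {x y : γ} {i : ℕ}
    (h : (fun o => o.bind f)^[i] (some x) = some y) : ∃ k ≤ i, pathFrom f x k = some y := by
  induction i generalizing y with
  | zero => exact ⟨0, le_rfl, h⟩
  | succ i ih =>
    rw [Function.iterate_succ_apply'] at h
    obtain ⟨w, hw, hwy⟩ := Option.bind_eq_some_iff.mp h
    obtain ⟨k, hki, hk⟩ := ih hw
    by_cases hy : y = x
    · exact ⟨0, Nat.zero_le _, by rw [hy]; rfl⟩
    · refine ⟨k + 1, by omega, ?_⟩
      rw [pathFrom, Function.iterate_succ_apply', ← pathFrom, hk]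
      simp [cutAt, hwy, hy]

end Path

namespace PartialInj_s10

variable {γ : Type*} [DecidableEq γ]

lemma pathFrom_inj (α : PartialInj_s10 γ) {x y : γ} {i j : ℕ}
    (hi : pathFrom α x i = some y) (hj : pathFrom α x j = some y) : i = j := by
  induction i generalizing j y with
  | zero =>
    cases j with
    | zero => rfl
    | succ j =>
      obtain ⟨_, _, _, hyx⟩ := pathFrom_succ_eq_some hj
      exact absurd (Option.some_injective _ hi).symm hyx
  | succ i ih =>
    obtain ⟨w, hw, hwy, hyx⟩ := pathFrom_succ_eq_some hi
    cases j with
    | zero => exact absurd (Option.some_injective _ hj).symm hyx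
    | succ j =>
      obtain ⟨w', hw', hwy', _⟩ := pathFrom_succ_eq_some hj
      rw [ih hw (α.inj hwy' hwy ▸ hw')]

lemma map_swap_cutAt_contract {x₀ x₁ : γ} (hx : x₀ ≠ x₁)
    (α : {α : PartialInj_s10 γ // α x₀ = some x₁}) (y : {y // y ≠ x₁}) :
    (cutAt (contract x₀ x₁ α) ⟨x₀, hx⟩ y).map (fun z : {y // y ≠ x₁} => Equiv.swap x₀ x₁ z) =
      cutAt α.1 x₀ (Equiv.swap x₀ x₁ y) := by
  have hα := map_val_contract α y
  unfold cutAt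
  rcases h : contract x₀ x₁ α y with _ | z
  · rw [h] at hα
    simp [← hα]
  · rw [h] at hα
    simp only [Option.map_some] at hα
    rw [← hα]
    by_cases hz : z = ⟨x₀, hx⟩
    · simp [hz]
    · have hz' : z.1 ≠ x₀ := fun h => hz (Subtype.ext h)
      simp [hz, hz', Equiv.swap_apply_of_ne_of_ne hz' z.2]

lemma isSome_pathFrom_contract {x₀ x₁ : γ} (hx : x₀ ≠ x₁)
    (α : {α : PartialInj_s10 γ // α x₀ = some x₁}) (k : ℕ) :
    (pathFrom (contract x₀ x₁ α) ⟨x₀, hx⟩ k).isSome = (pathFrom α.1 x₀ (k + 1)).isSome := by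
  have hcut : cutAt α.1 x₀ x₀ = some x₁ := by simp [cutAt, α.2, hx.symm]
  have h := map_iterate_bind_of_semiconj (map_swap_cutAt_contract hx α) k (some ⟨x₀, hx⟩)
  rw [Option.map_some, Equiv.swap_apply_left] at h
  rw [pathFrom, pathFrom_succ, hcut, ← h, Option.isSome_map]

variable [Fintype γ]

lemma filter_exists_iterate_eq (α : PartialInj_s10 γ) (x : γ) :
    univ.filter (fun y => ∃ i < Fintype.card γ, (fun o => o.bind α)^[i] (some x) = some y) =
      ((range (Fintype.card γ)).filter fun k => (pathFrom α x k).isSome).image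
        fun k => (pathFrom α x k).getD x := by
  ext y
  simp only [mem_filter, mem_univ, true_and, mem_image, mem_range]
  constructor
  · rintro ⟨i, hi, hy⟩
    obtain ⟨k, hki, hk⟩ := exists_pathFrom_eq_some hy
    exact ⟨k, ⟨by omega, by simp [hk]⟩, by simp [hk]⟩
  · rintro ⟨k, ⟨hk, hks⟩, rfl⟩
    obtain ⟨z, hz⟩ := Option.isSome_iff_exists.mp hks
    exact ⟨k, hk, by rw [iterate_bind_eq_of_pathFrom_eq_some hz, hz]; rfl⟩

lemma card_filter_exists_iterate_eq (α : PartialInj_s10 γ) (x : γ) :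
    #(univ.filter fun y => ∃ i < Fintype.card γ, (fun o => o.bind α)^[i] (some x) = some y) =
      #((range (Fintype.card γ)).filter fun k => (pathFrom α x k).isSome) := by
  rw [α.filter_exists_iterate_eq]
  refine card_image_of_injOn fun i hi j hj hij => ?_
  simp only [coe_filter, Set.mem_ofPred_eq] at hi hj
  obtain ⟨z, hz⟩ := Option.isSome_iff_exists.mp hi.2
  obtain ⟨z', hz'⟩ := Option.isSome_iff_exists.mp hj.2
  simp only [hz, hz', Option.getD_some] at hij
  exact α.pathFrom_inj hz (hij ▸ hz')

lemma card_filter_isSome_pathFrom_of_apply_eq_none (α : PartialInj_s10 γ) {x : γ}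
    (hx : α x = none) :
    #((range (Fintype.card γ)).filter fun k => (pathFrom α x k).isSome) = 1 := by
  rw [card_eq_one]
  refine ⟨0, Finset.ext fun k => ?_⟩
  cases k with
  | zero => simpa using Fintype.card_pos_iff.mpr ⟨x⟩
  | succ k => simp [pathFrom_succ_eq_none (f := α) (x := x) (by simp [cutAt, hx]) k]

lemma card_isSome_pathFrom_succ (x₀ : γ) (k : ℕ) :
    Fintype.card {α : PartialInj_s10 γ // (pathFrom α x₀ (k + 1)).isSome} =
      ∑ x₁ : {x₁ // x₁ ≠ x₀}, Fintype.card
        {β : PartialInj_s10 {y // y ≠ x₁.1} // (pathFrom β ⟨x₀, x₁.2.symm⟩ k).isSome} := by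
  rw [card_eq_sum_card_apply_eq _ x₀, Fintype.sum_option, Fintype.sum_eq_add_sum_subtype_ne _ x₀]
  have h_none : Fintype.card
      {α : PartialInj_s10 γ // (pathFrom α x₀ (k + 1)).isSome ∧ α x₀ = none} = 0 :=
    Fintype.card_eq_zero_iff.mpr ⟨fun α => by
      simpa [pathFrom_succ_eq_none (f := α.1) (x := x₀) (by simp [cutAt, α.2.2]) k] using α.2.1⟩
  have h_self : Fintype.card
      {α : PartialInj_s10 γ // (pathFrom α x₀ (k + 1)).isSome ∧ α x₀ = some x₀} = 0 :=
    Fintype.card_eq_zero_iff.mpr ⟨fun α => by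
      simpa [pathFrom_succ_eq_none (f := α.1) (x := x₀) (by simp [cutAt, α.2.2]) k] using α.2.1⟩
  rw [h_none, h_self, zero_add, zero_add]
  refine Finset.sum_congr rfl fun x₁ _ => Fintype.card_congr ?_
  exact (Equiv.subtypeEquivRight fun α => and_comm).trans
    ((Equiv.subtypeSubtypeEquivSubtypeInter _ _).symm.trans
      (Equiv.subtypeEquiv (contract x₀ x₁) fun α => by
        rw [isSome_pathFrom_contract x₁.2.symm]))

lemma card_isSome_pathFrom {m : ℕ} (h : Fintype.card γ = m + 1) (x₀ : γ) (k : ℕ) :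
    Fintype.card {α : PartialInj_s10 γ // (pathFrom α x₀ k).isSome} =
      m.descFactorial k * count (m + 1 - k) := by
  induction k generalizing γ m with
  | zero => simp [card_eq_count h]
  | succ k ih =>
    rw [card_isSome_pathFrom_succ]
    rcases m with _ | m
    · have := Fintype.card_eq_zero_iff.mp (card_subtype_ne_of_card_eq h x₀)
      simp
    · rw [Finset.sum_congr rfl fun x₁ _ => ih (card_subtype_ne_of_card_eq h x₁.1) _]
      rw [Finset.sum_const, Finset.card_univ, card_subtype_ne_of_card_eq h, smul_eq_mul,
        Nat.succ_descFactorial_succ, Nat.add_sub_add_right, mul_assoc]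

lemma sum_card_filter_isSome_pathFrom {m : ℕ} (h : Fintype.card γ = m + 1) (x₀ : γ) :
    ∑ α : PartialInj_s10 γ, #((range (m + 1)).filter fun k => (pathFrom α x₀ k).isSome) =
      (m + 2) * countUndef m := by
  simp only [card_filter]
  rw [sum_comm, ← sum_descFactorial_mul_count]
  refine sum_congr rfl fun k _ => ?_
  rw [← card_isSome_pathFrom h x₀ k, Fintype.card_subtype, card_filter]

lemma sum_card_filter_apply_eq_none {m : ℕ} (h : Fintype.card γ = m + 1) :
    ∑ α : PartialInj_s10 γ, #(univ.filter fun x => α x = none) = (m + 1) * countUndef m := by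
  simp only [card_filter]
  rw [sum_comm]
  simp [← Fintype.card_subtype, card_apply_eq_none h, h]

end PartialInj_s10

lemma iterate_bind_of_bind {γ : Type*} (f : γ → Option γ) (k : ℕ) (o : Option γ) :
    (fun o => o.bind f)^[k] o = o.bind fun y => (fun o => o.bind f)^[k] (some y) := by
  cases o with
  | none => exact Function.iterate_fixed rfl k
  | some y => rfl

lemma iterMap_eq_iterate {n : ℕ} (f : Fin n → Option (Fin n)) (k : ℕ) (x : Fin n) :
    iterMap n f k x = (fun o => o.bind f)^[k] (some x) := by
  induction k generalizing x with
  | zero => rfl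
  | succ k ih =>
    rw [Function.iterate_succ_apply, iterMap, iterate_bind_of_bind]
    simp only [ih, Option.bind_some]

def PInj.toPartialInj {n : ℕ} : PInj n ≃ PartialInj_s10 (Fin n) where
  toFun α := ⟨α.1, α.2⟩
  invFun α := ⟨α, α.injOnDom⟩

@[simp] lemma PInj.coe_toPartialInj {n : ℕ} (α : PInj n) : ⇑(PInj.toPartialInj α) = α.val :=
  rfl

lemma PInj.sum_eq_sum_partialInj {n : ℕ} (F : (Fin n → Option (Fin n)) → ℕ) :
    ∑ α : PInj n, F α.val = ∑ α : PartialInj_s10 (Fin n), F α :=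
  Fintype.sum_equiv PInj.toPartialInj _ _ fun _ => rfl

lemma orbitLen_add_ite {n : ℕ} (α : PInj n) (x : Fin n) :
    orbitLen n α x + (if α.val x = none then 1 else 0) =
      #((range n).filter fun k => (pathFrom α.val x k).isSome) := by
  have hcard := Fintype.card_fin n
  unfold orbitLen
  split_ifs with hx
  · simpa [hcard] using
      ((PInj.toPartialInj α).card_filter_isSome_pathFrom_of_apply_eq_none hx).symm
  · simpa [iterMap_eq_iterate, hcard] using
      (PInj.toPartialInj α).card_filter_exists_iterate_eq x

lemma sub_domCard {n : ℕ} (α : PInj n) :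
    n - domCard n α = #(univ.filter fun x => α.val x = none) := by
  have := card_filter_add_card_filter_not (s := univ) (p := fun x => α.val x ≠ none)
  simp only [card_univ, Fintype.card_fin, not_not] at this
  rw [domCard]
  omega

open PartialInj_s10

lemma sum_ite_apply_eq_none {m : ℕ} (x : Fin (m + 1)) :
    ∑ α : PInj (m + 1), (if α.val x = none then 1 else 0) = countUndef m := by
  rw [PInj.sum_eq_sum_partialInj fun f => if f x = none then 1 else 0, sum_boole,
    Nat.cast_id, ← Fintype.card_subtype]
  exact card_apply_eq_none (Fintype.card_fin _) x

lemma sum_orbitLen_add_ite {m : ℕ} (x : Fin (m + 1)) :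
    ∑ α : PInj (m + 1), (orbitLen (m + 1) α x + if α.val x = none then 1 else 0) =
      (m + 2) * countUndef m := by
  simp only [orbitLen_add_ite]
  rw [PInj.sum_eq_sum_partialInj fun f =>
    #((range (m + 1)).filter fun k => (pathFrom f x k).isSome)]
  exact sum_card_filter_isSome_pathFrom (Fintype.card_fin _) x

lemma sum_sub_domCard (m : ℕ) :
    ∑ α : PInj (m + 1), (m + 1 - domCard (m + 1) α) = (m + 1) * countUndef m := by
  simp only [sub_domCard]
  rw [PInj.sum_eq_sum_partialInj fun f => #(univ.filter fun x => f x = none)]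
  exact sum_card_filter_apply_eq_none (Fintype.card_fin _)

theorem stmt10 (n : ℕ) (h : 0 < n) :
    ∑ α : PInj n, orbitLen n α ⟨0, h⟩ = ∑ α : PInj n, (n - domCard n α) := by
  obtain ⟨m, rfl⟩ : ∃ m, n = m + 1 := Nat.exists_eq_add_one.mpr h
  have hsum := sum_orbitLen_add_ite (⟨0, h⟩ : Fin (m + 1))
  rw [sum_add_distrib, sum_ite_apply_eq_none] at hsum
  rw [sum_sub_domCard]
  linarith
end

section
/- The number of nilpotent elements α in IS_n with 1 not in dom(α) equals |IS_{n-1}|. -/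
/-!
A partial injection `f` of a finite set `Y` splits along its set `C` of immortal points, those
whose orbit never leaves the domain: on `C` it is a permutation, on the rest a nilpotent partial
injection. Hence `|IS(Y)| = ∑_{C ⊆ Y} |C|! · N(Y \ C)`, where `N(T)` counts the nilpotent partial
injections supported in `T`.

A nilpotent partial injection `f` of `X` with `f o` undefined splits in the same way along the set
`P` of points whose orbit runs into `o`: on `P ∪ {o}` it is a single chain ending at `o`, that is,
a linear order of `P` (read off from the hitting times of `o`), and on the rest it is again
nilpotent. So these maps number `∑_{P ⊆ Y} |P|! · N(Y \ P)` with `Y = X \ {o}`, which is `|IS(Y)|`.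
Counting partial injections by their domain gives `|IS_m| = ∑_j binom(m, j) · m! / (m - j)!`.
-/

namespace PartialMap

open Finset
open scoped Nat Classical

variable {X : Type*}

def PartialInjective (f : X → Option X) : Prop :=
  ∀ a b c, f a = some c → f b = some c → a = b

def iterate (f : X → Option X) : ℕ → X → Option X
  | 0, x => some x
  | k + 1, x => (f x).bind (iterate f k)

def IsNilpotent (f : X → Option X) : Prop :=
  ∃ k, ∀ x, iterate f k x = none

def IsInvariant (f : X → Option X) (S : Finset X) : Prop :=
  ∀ x ∈ S, ∀ y, f x = some y → y ∈ S

def SupportedIn (f : X → Option X) (S : Finset X) : Prop :=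
  ∀ x y, f x = some y → x ∈ S ∧ y ∈ S

section Iterate

variable {f g : X → Option X} {S T : Finset X} {o x y : X} {k : ℕ}

@[simp]
lemma iterate_zero (f : X → Option X) (x : X) : iterate f 0 x = some x := rfl

lemma iterate_succ (f : X → Option X) (k : ℕ) (x : X) :
    iterate f (k + 1) x = (f x).bind (iterate f k) := rfl

lemma iterate_succ_of_apply_eq_some (h : f x = some y) : iterate f (k + 1) x = iterate f k y := by
  rw [iterate_succ, h, Option.bind_some]

lemma iterate_succ_of_apply_eq_none (h : f x = none) : iterate f (k + 1) x = none := by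
  rw [iterate_succ, h, Option.bind_none]

lemma iterate_one (f : X → Option X) (x : X) : iterate f 1 x = f x := by
  cases h : f x
  · exact iterate_succ_of_apply_eq_none h
  · exact iterate_succ_of_apply_eq_some h

lemma iterate_add (f : X → Option X) (a b : ℕ) (x : X) :
    iterate f (a + b) x = (iterate f a x).bind (iterate f b) := by
  induction a generalizing x with
  | zero => simp
  | succ a ih =>
    rw [Nat.add_right_comm, iterate_succ, iterate_succ, Option.bind_assoc]
    exact congrArg _ (funext ih)

lemma iterate_eq_none_of_le {m : ℕ} (h : iterate f k x = none) (hkm : k ≤ m) :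
    iterate f m x = none := by
  obtain ⟨d, rfl⟩ := Nat.exists_eq_add_of_le hkm
  rw [iterate_add, h, Option.bind_none]

lemma iterate_congr (hg : IsInvariant g S) (hfg : ∀ x ∈ S, f x = g x) (hx : x ∈ S) (k : ℕ) :
    iterate f k x = iterate g k x := by
  induction k generalizing x with
  | zero => rfl
  | succ k ih =>
    cases hgx : g x with
    | none => rw [iterate_succ_of_apply_eq_none hgx, iterate_succ_of_apply_eq_none (hfg x hx ▸ hgx)]
    | some y =>
      rw [iterate_succ_of_apply_eq_some hgx, iterate_succ_of_apply_eq_some (hfg x hx ▸ hgx)]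
      exact ih (hg x hx y hgx)

lemma iterate_mem (hf : IsInvariant f S) (hx : x ∈ S) (h : iterate f k x = some y) : y ∈ S := by
  induction k generalizing x with
  | zero => exact Option.some_injective _ h ▸ hx
  | succ k ih =>
    cases hfx : f x with
    | none => rw [iterate_succ_of_apply_eq_none hfx] at h; cases h
    | some z => exact ih (hf x hx z hfx) (iterate_succ_of_apply_eq_some hfx ▸ h)

lemma iterate_ne_none_of_total (hg : IsInvariant g S) (htot : ∀ x ∈ S, g x ≠ none) (hx : x ∈ S)
    (k : ℕ) :
    iterate g k x ≠ none := by
  induction k generalizing x with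
  | zero => simp
  | succ k ih =>
    obtain ⟨y, hy⟩ := Option.ne_none_iff_exists'.1 (htot x hx)
    rw [iterate_succ_of_apply_eq_some hy]
    exact ih (hg x hx y hy)

lemma PartialInjective.iterate (hf : PartialInjective f) (k : ℕ) :
    PartialInjective (iterate f k) := by
  induction k with
  | zero => intro a b c ha hb; exact (Option.some_injective _ (ha.trans hb.symm))
  | succ k ih =>
    intro a b c ha hb
    cases hfa : f a with
    | none => rw [iterate_succ_of_apply_eq_none hfa] at ha; cases ha
    | some a' =>
      cases hfb : f b with
      | none => rw [iterate_succ_of_apply_eq_none hfb] at hb; cases hb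
      | some b' =>
        rw [iterate_succ_of_apply_eq_some hfa] at ha
        rw [iterate_succ_of_apply_eq_some hfb] at hb
        exact hf a b a' hfa (ih a' b' c ha hb ▸ hfb)

lemma eq_of_iterate_eq_some_sink (ho : f o = none) {a b : ℕ} (ha : iterate f a x = some o)
    (hb : iterate f b x = some o) : a = b := by
  have key : ∀ {a b}, iterate f a x = some o → iterate f b x = some o → ¬ a < b := by
    intro a b ha hb hab
    obtain ⟨m, rfl⟩ := Nat.exists_eq_add_of_lt hab
    rw [add_assoc, iterate_add, ha, Option.bind_some, iterate_succ_of_apply_eq_none ho] at hb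
    cases hb
  exact le_antisymm (not_lt.1 (key hb ha)) (not_lt.1 (key ha hb))

lemma iterate_succ_eq_none_of_eq_some_sink (ho : f o = none) {k : ℕ} (h : iterate f k x = some o) :
    iterate f (k + 1) x = none := by
  rw [iterate_add, h, Option.bind_some, iterate_one, ho]

lemma SupportedIn.apply_eq_none (hf : SupportedIn f S) (hx : x ∉ S) : f x = none :=
  Option.eq_none_iff_forall_ne_some.2 fun y hy => hx (hf x y hy).1

lemma SupportedIn.isInvariant (hf : SupportedIn f T) (hTS : T ⊆ S) : IsInvariant f S :=
  fun x _ y hy => hTS (hf x y hy).2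

end Iterate

section Restrict

variable [DecidableEq X] {f g h : X → Option X} {S : Finset X} {x y : X}

def restrict (S : Finset X) (f : X → Option X) : X → Option X :=
  S.piecewise f fun _ => none

@[simp]
lemma restrict_of_mem (hx : x ∈ S) : restrict S f x = f x :=
  piecewise_eq_of_mem _ _ _ hx

@[simp]
lemma restrict_of_notMem (hx : x ∉ S) : restrict S f x = none :=
  piecewise_eq_of_notMem _ _ _ hx

lemma restrict_eq_some : restrict S f x = some y ↔ x ∈ S ∧ f x = some y := by
  by_cases hx : x ∈ S <;> simp [hx]

lemma iterate_restrict_of_mem (hf : IsInvariant f S) (hx : x ∈ S) (k : ℕ) :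
    iterate (restrict S f) k x = iterate f k x :=
  iterate_congr hf (fun _ hx => restrict_of_mem hx) hx k

lemma iterate_eq_some_of_iterate_restrict {k : ℕ} (h : iterate (restrict S f) k x = some y) :
    iterate f k x = some y := by
  induction k generalizing x with
  | zero => exact h
  | succ k ih =>
    cases hx : restrict S f x with
    | none => rw [iterate_succ_of_apply_eq_none hx] at h; cases h
    | some z =>
      rw [iterate_succ_of_apply_eq_some hx] at h
      rw [iterate_succ_of_apply_eq_some (restrict_eq_some.1 hx).2]
      exact ih h

lemma IsNilpotent.restrict (hf : IsNilpotent f) : IsNilpotent (restrict S f) := by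
  obtain ⟨k, hk⟩ := hf
  refine ⟨k, fun x => Option.eq_none_iff_forall_ne_some.2 fun y hy => ?_⟩
  simpa [hk x] using iterate_eq_some_of_iterate_restrict hy

lemma PartialInjective.restrict (hf : PartialInjective f) : PartialInjective (restrict S f) :=
  fun a b c ha hb => hf a b c (restrict_eq_some.1 ha).2 (restrict_eq_some.1 hb).2

lemma iterate_piecewise_of_mem (hg : IsInvariant g S) (hx : x ∈ S) (k : ℕ) :
    iterate (S.piecewise g h) k x = iterate g k x :=
  iterate_congr hg (fun _ hx => piecewise_eq_of_mem _ _ _ hx) hx k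

end Restrict

section ChainMap

variable [DecidableEq X] {o x : X} {P : Finset X} (e : P ≃ Fin #P)

/-- The chain `e⁻¹ (#P - 1) ↦ ⋯ ↦ e⁻¹ 1 ↦ e⁻¹ 0 ↦ o` through the points of `P`. -/
def chainMap (o : X) (P : Finset X) (e : P ≃ Fin #P) (x : X) : Option X :=
  if hx : x ∈ P then
    if (e ⟨x, hx⟩ : ℕ) = 0 then some o
    else some (e.symm ⟨e ⟨x, hx⟩ - 1, (Nat.sub_le _ _).trans_lt (e _).isLt⟩)
  else none

lemma chainMap_of_notMem (hx : x ∉ P) : chainMap o P e x = none := by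
  simp [chainMap, hx]

lemma iterate_chainMap (x : P) : iterate (chainMap o P e) (e x + 1) x = some o := by
  suffices ∀ m, ∀ x : P, (e x : ℕ) = m → iterate (chainMap o P e) (m + 1) x = some o from
    this _ x rfl
  intro m
  induction m with
  | zero => intro x hx; simp [iterate_one, chainMap, hx]
  | succ m ih =>
    intro x hx
    have hm : m < #P := by have := (e x).isLt; omega
    rw [iterate_succ_of_apply_eq_some (f := chainMap o P e) (x := x) (y := e.symm ⟨m, hm⟩)]
    · exact ih _ (by simp)
    · simp [chainMap, hx]

end ChainMap

section Finite

variable [Fintype X] {f : X → Option X} {S : Finset X} {o x : X}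

lemma isNilpotent_iff : IsNilpotent f ↔ ∀ x, ∃ k, iterate f k x = none := by
  refine ⟨fun ⟨k, hk⟩ x => ⟨k, hk x⟩, fun h => ?_⟩
  choose K hK using h
  exact ⟨univ.sup K, fun x => iterate_eq_none_of_le (hK x) (le_sup (mem_univ x))⟩

def dom (f : X → Option X) : Finset X := {x | (f x).isSome}

@[simp]
lemma mem_dom : x ∈ dom f ↔ (f x).isSome := by
  simp [dom]

lemma dom_subset (hf : SupportedIn f S) : dom f ⊆ S := by
  intro x hx
  obtain ⟨y, hy⟩ := Option.isSome_iff_exists.1 (mem_dom.1 hx)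
  exact (hf x y hy).1

noncomputable def immortalSet (f : X → Option X) : Finset X := {x | ∀ k, iterate f k x ≠ none}

lemma mem_immortalSet : x ∈ immortalSet f ↔ ∀ k, iterate f k x ≠ none := by
  simp [immortalSet]

lemma isInvariant_immortalSet (f : X → Option X) : IsInvariant f (immortalSet f) := by
  intro x hx y hy
  rw [mem_immortalSet] at hx ⊢
  intro k
  rw [← iterate_succ_of_apply_eq_some hy]
  exact hx (k + 1)

lemma apply_ne_none_of_mem_immortalSet (hx : x ∈ immortalSet f) : f x ≠ none := by
  simpa [iterate_one] using mem_immortalSet.1 hx 1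

noncomputable def reachSet (o : X) (f : X → Option X) : Finset X :=
  {x | x ≠ o ∧ ∃ k, iterate f k x = some o}

lemma mem_reachSet : x ∈ reachSet o f ↔ x ≠ o ∧ ∃ k, iterate f k x = some o := by
  simp [reachSet]

lemma exists_mem_reachSet_of_iterate_eq (ho : f o = none) {m : ℕ}
    (h : iterate f (m + 2) x = some o) :
    ∃ y ∈ reachSet o f, f x = some y ∧ iterate f (m + 1) y = some o := by
  cases hx : f x with
  | none => rw [iterate_succ_of_apply_eq_none hx] at h; cases h
  | some y =>
    rw [iterate_succ_of_apply_eq_some hx] at h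
    refine ⟨y, mem_reachSet.2 ⟨?_, m + 1, h⟩, rfl, h⟩
    rintro rfl
    rw [iterate_succ_of_apply_eq_none ho] at h
    cases h

lemma exists_equiv_fin_iterate_eq (hinj : PartialInjective f) (ho : f o = none) :
    ∃ e : reachSet o f ≃ Fin #(reachSet o f), ∀ x, iterate f (e x + 1) x = some o := by
  have hreach : ∀ x : reachSet o f, ∃ k, iterate f (k + 1) x = some o := by
    intro x
    obtain ⟨hxo, k, hk⟩ := mem_reachSet.1 x.2
    cases k with
    | zero => exact absurd (Option.some_injective _ hk) hxo
    | succ k => exact ⟨k, hk⟩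
  choose d hd using hreach
  have hd_inj : Function.Injective d := fun a b hab =>
    Subtype.ext (hinj.iterate _ a b o (hd a) (hab ▸ hd b))
  have hd_down : ∀ m x, d x = m → ∀ i ≤ m, ∃ y, d y = i := by
    intro m
    induction m with
    | zero => exact fun x hx i hi => ⟨x, by omega⟩
    | succ m ih =>
      intro x hx i hi
      rcases hi.lt_or_eq with hi | rfl
      · obtain ⟨y, hy, -, hyo⟩ := exists_mem_reachSet_of_iterate_eq ho (hx ▸ hd x)
        exact ih ⟨y, hy⟩ (Nat.succ_injective (eq_of_iterate_eq_some_sink ho (hd _) hyo)) i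
          (by omega)
      · exact ⟨x, hx⟩
  have hd_lt : ∀ x, d x < #(reachSet o f) := by
    intro x
    have hsub : range (d x + 1) ⊆ univ.image d := fun i hi => by
      obtain ⟨y, hy⟩ := hd_down _ x rfl i (Nat.lt_succ_iff.1 (mem_range.1 hi))
      exact mem_image.2 ⟨y, mem_univ _, hy⟩
    simpa using (card_le_card hsub).trans card_image_le
  refine ⟨Equiv.ofBijective (fun x => ⟨d x, hd_lt x⟩)
    ((Fintype.bijective_iff_injective_and_card _).2
      ⟨fun a b hab => hd_inj (Fin.mk.inj_iff.1 hab), by simp⟩), hd⟩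

end Finite

section Counting

variable [DecidableEq X] [Fintype X] {f g h : X → Option X} {S C Y P : Finset X} {o x : X}

lemma PartialInjective.piecewise (hg : PartialInjective g) (hh : PartialInjective h)
    (hgS : IsInvariant g S) (hhS : IsInvariant h Sᶜ) : PartialInjective (S.piecewise g h) := by
  intro a b c ha hb
  by_cases haS : a ∈ S <;> by_cases hbS : b ∈ S <;>
    simp only [piecewise_eq_of_mem, piecewise_eq_of_notMem, haS, hbS, not_false_eq_true]
      at ha hb
  · exact hg a b c ha hb
  · exact absurd (hgS a haS c ha) (mem_compl.1 (hhS b (mem_compl.2 hbS) c hb))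
  · exact absurd (hgS b hbS c hb) (mem_compl.1 (hhS a (mem_compl.2 haS) c ha))
  · exact hh a b c ha hb

lemma iterate_piecewise_of_notMem (hh : IsInvariant h Sᶜ) (hx : x ∉ S) (k : ℕ) :
    iterate (S.piecewise g h) k x = iterate h k x :=
  iterate_congr hh (fun _ hx => piecewise_eq_of_notMem _ _ _ (mem_compl.1 hx)) (mem_compl.2 hx) k

lemma card_eq_mul_card_of_piecewise (S : Finset X) {F A B : Finset (X → Option X)}
    (hA : ∀ g ∈ A, ∀ x ∉ S, g x = none) (hB : ∀ h ∈ B, ∀ x ∈ S, h x = none)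
    (hglue : ∀ g ∈ A, ∀ h ∈ B, S.piecewise g h ∈ F)
    (hsplit : ∀ f ∈ F, restrict S f ∈ A ∧ restrict Sᶜ f ∈ B) :
    #F = #A * #B := by
  rw [← card_product]
  refine (card_nbij' (fun p => S.piecewise p.1 p.2) (fun f => (restrict S f, restrict Sᶜ f))
    (fun p hp => hglue _ (mem_product.1 hp).1 _ (mem_product.1 hp).2)
    (fun f hf => mem_product.2 (hsplit f hf)) (fun p hp => ?_) (fun f _ => ?_)).symm
  · obtain ⟨hg, hh⟩ := mem_product.1 hp
    ext1 <;> funext x <;> by_cases hx : x ∈ S <;> simp [hx, hA _ hg, hB _ hh]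
  · funext x
    by_cases hx : x ∈ S <;> simp [hx]

def ofEmbedding {D E : Finset X} (u : D ↪ E) (x : X) : Option X :=
  if hx : x ∈ D then some (u ⟨x, hx⟩) else none

lemma card_filter_dom_eq {D E : Finset X} (hDE : D ⊆ E) :
    #{g : X → Option X | PartialInjective g ∧ SupportedIn g E ∧ dom g = D} =
      (#E).descFactorial (#D) := by
  rw [← Fintype.card_coe D, ← Fintype.card_coe E, ← Fintype.card_embedding_eq, ← card_univ]
  symm
  refine card_bij (fun u _ => ofEmbedding u) (fun u _ => ?_) (fun u _ v _ huv => ?_) ?_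
  · refine mem_filter.2 ⟨mem_univ _, fun a b c ha hb => ?_, fun x y hxy => ?_, ?_⟩
    · simp only [ofEmbedding] at ha hb
      split_ifs at ha hb with ha' hb'
      cases Option.some_injective _ ha
      exact congrArg Subtype.val (u.injective (Subtype.ext (Option.some_injective _ hb))).symm
    · simp only [ofEmbedding] at hxy
      split_ifs at hxy with hx
      cases hxy
      exact ⟨hDE hx, (u _).2⟩
    · ext x
      by_cases hx : x ∈ D <;> simp [dom, ofEmbedding, hx]
  · ext x
    have := congrFun huv x
    simp only [ofEmbedding, x.2, dite_true, Option.some_inj] at this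
    exact this
  · intro g hg
    obtain ⟨-, hinj, hsupp, hdom⟩ := mem_filter.1 hg
    have hval : ∀ x : D, ∃ y : E, g x = some (y : X) := by
      intro x
      obtain ⟨y, hy⟩ := Option.isSome_iff_exists.1 (mem_dom.1 (hdom ▸ x.2 : (x : X) ∈ dom g))
      exact ⟨⟨y, (hsupp x y hy).2⟩, hy⟩
    choose u hu using hval
    refine ⟨⟨u, fun a b hab => Subtype.ext (hinj a b (u a) (hu a) (hab ▸ hu b))⟩, mem_univ _, ?_⟩
    funext x
    by_cases hx : x ∈ D
    · simp only [ofEmbedding, hx, dite_true]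
      exact (hu ⟨x, hx⟩).symm
    · have hgx : g x = none := by simpa [← hdom] using hx
      simp [ofEmbedding, hx, hgx]

lemma card_supportedIn_eq_sum_descFactorial (Y : Finset X) :
    #{f : X → Option X | PartialInjective f ∧ SupportedIn f Y} =
      ∑ D ∈ Y.powerset, (#Y).descFactorial #D := by
  rw [card_eq_sum_card_fiberwise (f := dom) (t := Y.powerset)
    fun f hf => mem_powerset.2 (dom_subset (mem_filter.1 hf).2.2)]
  refine sum_congr rfl fun D hD => ?_
  rw [filter_filter, ← card_filter_dom_eq (mem_powerset.1 hD)]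
  simp only [and_assoc]

lemma card_supportedIn (Y : Finset X) :
    #{f : X → Option X | PartialInjective f ∧ SupportedIn f Y} =
      ∑ j ∈ range (#Y + 1), (#Y).choose j ^ 2 * j ! := by
  rw [card_supportedIn_eq_sum_descFactorial,
    sum_powerset_apply_card (fun j => (#Y).descFactorial j)]
  refine sum_congr rfl fun j _ => ?_
  rw [smul_eq_mul, Nat.descFactorial_eq_factorial_mul_choose]
  ring

lemma isInvariant_compl_immortalSet (f : X → Option X) : IsInvariant f (immortalSet f)ᶜ := by
  intro x hx y hy
  simp only [mem_compl, mem_immortalSet, not_forall, not_not] at hx ⊢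
  obtain ⟨k, hk⟩ := hx
  cases k with
  | zero => cases hk
  | succ k => exact ⟨k, iterate_succ_of_apply_eq_some hy ▸ hk⟩

lemma immortalSet_piecewise (hg_supp : SupportedIn g C) (hg_dom : dom g = C)
    (hh_nil : IsNilpotent h) (hhC : IsInvariant h Cᶜ) : immortalSet (C.piecewise g h) = C := by
  have hgC : IsInvariant g C := hg_supp.isInvariant subset_rfl
  ext x
  rw [mem_immortalSet]
  by_cases hx : x ∈ C
  · have htot : ∀ x ∈ C, g x ≠ none := fun x hx => by
      simpa [← hg_dom, Option.isSome_iff_ne_none] using hx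
    simp only [hx, iff_true]
    intro k
    rw [iterate_piecewise_of_mem hgC hx]
    exact iterate_ne_none_of_total hgC htot hx k
  · simp only [hx, iff_false, not_forall, not_not]
    obtain ⟨k, hk⟩ := hh_nil
    exact ⟨k, (iterate_piecewise_of_notMem hhC hx k).trans (hk x)⟩

lemma dom_restrict_immortalSet (f : X → Option X) :
    dom (restrict (immortalSet f) f) = immortalSet f := by
  ext x
  by_cases hx : x ∈ immortalSet f
  · simp [hx, Option.isSome_iff_ne_none, apply_ne_none_of_mem_immortalSet hx]
  · simp [hx]

lemma isNilpotent_restrict_compl_immortalSet (f : X → Option X) :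
    IsNilpotent (restrict (immortalSet f)ᶜ f) := by
  refine isNilpotent_iff.2 fun x => ?_
  by_cases hx : x ∈ immortalSet f
  · exact ⟨1, by rw [iterate_one, restrict_of_notMem (by simpa using hx)]⟩
  · obtain ⟨k, hk⟩ : ∃ k, iterate f k x = none := by simpa [mem_immortalSet] using hx
    exact ⟨k, (iterate_restrict_of_mem (isInvariant_compl_immortalSet f) (mem_compl.2 hx) k).trans
      hk⟩

lemma card_filter_immortalSet_eq (hCY : C ⊆ Y) :
    #{f | (PartialInjective f ∧ SupportedIn f Y) ∧ immortalSet f = C} =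
      (#C)! * #{h | PartialInjective h ∧ IsNilpotent h ∧ SupportedIn h (Y \ C)} := by
  -- the permutations of `C` are counted as the embeddings `C ↪ C`
  rw [← Nat.descFactorial_self, ← card_filter_dom_eq (subset_refl C)]
  apply card_eq_mul_card_of_piecewise C
  · exact fun g hg x hx => (mem_filter.1 hg).2.2.1.apply_eq_none hx
  · exact fun h hh x hx => (mem_filter.1 hh).2.2.2.apply_eq_none fun hx' => (mem_sdiff.1 hx').2 hx
  · intro g hg h hh
    obtain ⟨-, hg_inj, hg_supp, hg_dom⟩ := mem_filter.1 hg
    obtain ⟨-, hh_inj, hh_nil, hh_supp⟩ := mem_filter.1 hh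
    have hhC : IsInvariant h Cᶜ := hh_supp.isInvariant fun x hx => mem_compl.2 (mem_sdiff.1 hx).2
    refine mem_filter.2 ⟨mem_univ _, ⟨hg_inj.piecewise hh_inj (hg_supp.isInvariant subset_rfl) hhC,
      fun x y hxy => ?_⟩, immortalSet_piecewise hg_supp hg_dom hh_nil hhC⟩
    by_cases hx : x ∈ C
    · rw [piecewise_eq_of_mem _ _ _ hx] at hxy
      exact ⟨hCY (hg_supp x y hxy).1, hCY (hg_supp x y hxy).2⟩
    · rw [piecewise_eq_of_notMem _ _ _ hx] at hxy
      exact ⟨sdiff_subset (hh_supp x y hxy).1, sdiff_subset (hh_supp x y hxy).2⟩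
  · intro f hf
    obtain ⟨-, ⟨hf_inj, hf_supp⟩, rfl⟩ := mem_filter.1 hf
    refine ⟨mem_filter.2
        ⟨mem_univ _, hf_inj.restrict, fun x y hxy => ?_, dom_restrict_immortalSet f⟩,
      mem_filter.2 ⟨mem_univ _, hf_inj.restrict, isNilpotent_restrict_compl_immortalSet f,
        fun x y hxy => ?_⟩⟩
    · obtain ⟨hx, hfx⟩ := restrict_eq_some.1 hxy
      exact ⟨hx, isInvariant_immortalSet f x hx y hfx⟩
    · obtain ⟨hx, hfx⟩ := restrict_eq_some.1 hxy
      exact ⟨mem_sdiff.2 ⟨(hf_supp x y hfx).1, mem_compl.1 hx⟩,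
        mem_sdiff.2 ⟨(hf_supp x y hfx).2, mem_compl.1 (isInvariant_compl_immortalSet f x hx y hfx)⟩⟩

lemma card_supportedIn_eq_sum_isNilpotent (Y : Finset X) :
    #{f | PartialInjective f ∧ SupportedIn f Y} =
      ∑ C ∈ Y.powerset,
        (#C)! * #{h | PartialInjective h ∧ IsNilpotent h ∧ SupportedIn h (Y \ C)} := by
  rw [card_eq_sum_card_fiberwise (f := immortalSet) (t := Y.powerset)
    fun f hf => mem_powerset.2 fun x hx => ?_]
  · exact sum_congr rfl fun C hC => by
      rw [filter_filter, card_filter_immortalSet_eq (mem_powerset.1 hC)]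
  · obtain ⟨y, hy⟩ := Option.ne_none_iff_exists'.1 (apply_ne_none_of_mem_immortalSet hx)
    exact ((mem_filter.1 hf).2.2 x y hy).1

lemma isInvariant_insert_reachSet (ho : f o = none) : IsInvariant f (insert o (reachSet o f)) := by
  intro x hx y hy
  rcases mem_insert.1 hx with rfl | hx
  · rw [ho] at hy; cases hy
  obtain ⟨hxo, k, hk⟩ := mem_reachSet.1 hx
  cases k with
  | zero => exact absurd (Option.some_injective _ hk) hxo
  | succ k =>
    rw [iterate_succ_of_apply_eq_some hy] at hk
    by_cases hyo : y = o
    · exact hyo ▸ mem_insert_self _ _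
    · exact mem_insert_of_mem (mem_reachSet.2 ⟨hyo, k, hk⟩)

lemma isInvariant_compl_insert_reachSet : IsInvariant f (insert o (reachSet o f))ᶜ := by
  intro x hx y hy
  simp only [mem_compl, mem_insert, mem_reachSet, not_or, not_and, not_exists] at hx ⊢
  exact ⟨fun hyo => hx.2 hx.1 1 (by rw [iterate_one, hy, hyo]),
    fun _ k hk => hx.2 hx.1 (k + 1) (by rw [iterate_succ_of_apply_eq_some hy, hk])⟩

noncomputable def chainsInto (o : X) (P : Finset X) : Finset (X → Option X) :=
  {g | PartialInjective g ∧ SupportedIn g (insert o P) ∧ g o = none ∧ reachSet o g = P}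

lemma chainMap_mem_chainsInto (e : P ≃ Fin #P) (hoP : o ∉ P) : chainMap o P e ∈ chainsInto o P := by
  have ho : chainMap o P e o = none := chainMap_of_notMem e hoP
  have hmem : ∀ {x y}, chainMap o P e x = some y → x ∈ P := fun {x y} h => by
    by_contra hx
    rw [chainMap_of_notMem e hx] at h
    cases h
  refine mem_filter.2 ⟨mem_univ _, fun a b c ha hb => ?_, fun x y hxy => ?_, ho, ?_⟩
  · have hpa := iterate_chainMap (o := o) e ⟨a, hmem ha⟩
    have hpb := iterate_chainMap (o := o) e ⟨b, hmem hb⟩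
    rw [iterate_succ_of_apply_eq_some ha] at hpa
    rw [iterate_succ_of_apply_eq_some hb] at hpb
    exact congrArg Subtype.val (e.injective (Fin.ext (eq_of_iterate_eq_some_sink ho hpa hpb)))
  · refine ⟨mem_insert_of_mem (hmem hxy), ?_⟩
    simp only [chainMap, hmem hxy, dite_true] at hxy
    split_ifs at hxy
    · exact Option.some_injective _ hxy ▸ mem_insert_self o P
    · exact Option.some_injective _ hxy ▸ mem_insert_of_mem (Subtype.prop _)
  · ext x
    rw [mem_reachSet]
    refine ⟨fun ⟨hxo, k, hk⟩ => ?_,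
      fun hx => ⟨ne_of_mem_of_not_mem hx hoP, _, iterate_chainMap e ⟨x, hx⟩⟩⟩
    by_contra hx
    cases k with
    | zero => exact hxo (Option.some_injective _ hk)
    | succ k => rw [iterate_succ_of_apply_eq_none (chainMap_of_notMem e hx)] at hk; cases hk

lemma exists_chainMap_eq (hg : g ∈ chainsInto o P) : ∃ e, chainMap o P e = g := by
  obtain ⟨-, hinj, hsupp, ho, rfl⟩ := mem_filter.1 hg
  obtain ⟨e, he⟩ := exists_equiv_fin_iterate_eq hinj ho
  refine ⟨e, funext fun x => ?_⟩
  by_cases hx : x ∈ reachSet o g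
  · have h := he ⟨x, hx⟩
    simp only [chainMap, hx, dite_true]
    split_ifs with h0
    · rw [h0, zero_add, iterate_one] at h
      exact h.symm
    · obtain ⟨m, hm⟩ := Nat.exists_eq_succ_of_ne_zero h0
      rw [hm] at h
      obtain ⟨y, hy, hxy, hyo⟩ := exists_mem_reachSet_of_iterate_eq ho h
      have hey : (e ⟨y, hy⟩ : ℕ) = m :=
        Nat.succ_injective (eq_of_iterate_eq_some_sink ho (he ⟨y, hy⟩) hyo)
      rw [hxy, Option.some_inj, ← Subtype.coe_mk y hy, Subtype.coe_inj, Equiv.symm_apply_eq]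
      ext
      simp [hey, hm]
  · rw [chainMap_of_notMem e hx]
    by_cases hxo : x = o
    · rw [hxo, ho]
    · exact (hsupp.apply_eq_none (by simp [hxo, hx])).symm

lemma card_chainsInto (hoP : o ∉ P) : #(chainsInto o P) = (#P)! := by
  rw [← Fintype.card_coe P, ← Fintype.card_equiv P.equivFin, ← card_univ]
  symm
  refine card_bij (fun e _ => chainMap o P e) (fun e _ => chainMap_mem_chainsInto e hoP)
    (fun e _ e' _ hee' => ?_) (fun g hg => ?_)
  · ext x
    exact Nat.succ_injective (eq_of_iterate_eq_some_sink (chainMap_of_notMem e hoP)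
      (iterate_chainMap e x) (hee' ▸ iterate_chainMap e' x))
  · obtain ⟨e, he⟩ := exists_chainMap_eq hg
    exact ⟨e, mem_univ _, he⟩

lemma exists_iterate_piecewise_eq_some_iff (hg : g ∈ chainsInto o P)
    (hhS : IsInvariant h (insert o P)ᶜ) :
    (∃ k, iterate ((insert o P).piecewise g h) k x = some o) ↔ x ∈ insert o P := by
  obtain ⟨-, -, hg_supp, -, hg_reach⟩ := mem_filter.1 hg
  by_cases hx : x ∈ insert o P
  · simp only [hx, iff_true, iterate_piecewise_of_mem (hg_supp.isInvariant subset_rfl) hx]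
    rcases mem_insert.1 hx with rfl | hx
    · exact ⟨0, rfl⟩
    · exact (mem_reachSet.1 (hg_reach ▸ hx)).2
  · simp only [hx, iff_false, not_exists, iterate_piecewise_of_notMem hhS hx]
    exact fun k hk => mem_compl.1 (iterate_mem hhS (mem_compl.2 hx) hk) (mem_insert_self o P)

lemma reachSet_restrict_insert_reachSet (ho : f o = none) :
    reachSet o (restrict (insert o (reachSet o f)) f) = reachSet o f := by
  ext x
  simp only [mem_reachSet]
  refine and_congr_right fun hxo =>
    ⟨fun ⟨k, hk⟩ => ⟨k, iterate_eq_some_of_iterate_restrict hk⟩, fun ⟨k, hk⟩ => ⟨k, ?_⟩⟩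
  rwa [iterate_restrict_of_mem (isInvariant_insert_reachSet ho)
    (mem_insert_of_mem (mem_reachSet.2 ⟨hxo, k, hk⟩))]

lemma card_filter_reachSet_eq (hoP : o ∉ P) :
    #{f | (PartialInjective f ∧ IsNilpotent f ∧ f o = none) ∧ reachSet o f = P} =
      (#P)! * #{h | PartialInjective h ∧ IsNilpotent h ∧ SupportedIn h (univ.erase o \ P)} := by
  have hS : ∀ {x}, x ∈ univ.erase o \ P ↔ x ∉ insert o P := by simp [and_comm]
  rw [← card_chainsInto hoP]
  apply card_eq_mul_card_of_piecewise (insert o P)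
  · exact fun g hg x hx => (mem_filter.1 hg).2.2.1.apply_eq_none hx
  · exact fun h hh x hx => (mem_filter.1 hh).2.2.2.apply_eq_none fun hx' => hS.1 hx' hx
  · intro g hg h hh
    obtain ⟨-, hg_inj, hg_supp, hgo, -⟩ := mem_filter.1 hg
    obtain ⟨-, hh_inj, hh_nil, hh_supp⟩ := mem_filter.1 hh
    have hhS : IsInvariant h (insert o P)ᶜ :=
      hh_supp.isInvariant fun x hx => mem_compl.2 (hS.1 hx)
    have hreach x := exists_iterate_piecewise_eq_some_iff (x := x) hg hhS
    have hfo : (insert o P).piecewise g h o = none := by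
      rw [piecewise_eq_of_mem _ _ _ (mem_insert_self o P), hgo]
    refine mem_filter.2 ⟨mem_univ _,
      ⟨hg_inj.piecewise hh_inj (hg_supp.isInvariant subset_rfl) hhS, ?_, hfo⟩, ?_⟩
    · refine isNilpotent_iff.2 fun x => ?_
      by_cases hx : x ∈ insert o P
      · obtain ⟨k, hk⟩ := (hreach x).2 hx
        exact ⟨k + 1, iterate_succ_eq_none_of_eq_some_sink hfo hk⟩
      · obtain ⟨k, hk⟩ := hh_nil
        exact ⟨k, (iterate_piecewise_of_notMem hhS hx k).trans (hk x)⟩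
    · ext x
      rw [mem_reachSet, hreach, mem_insert]
      exact ⟨fun ⟨hxo, hx⟩ => hx.resolve_left hxo,
        fun hx => ⟨ne_of_mem_of_not_mem hx hoP, Or.inr hx⟩⟩
  · intro f hf
    obtain ⟨-, ⟨hf_inj, hf_nil, hfo⟩, rfl⟩ := mem_filter.1 hf
    refine ⟨mem_filter.2 ⟨mem_univ _, hf_inj.restrict, fun x y hxy => ?_,
        by rw [restrict_of_mem (mem_insert_self o _), hfo], reachSet_restrict_insert_reachSet hfo⟩,
      mem_filter.2 ⟨mem_univ _, hf_inj.restrict, hf_nil.restrict, fun x y hxy => ?_⟩⟩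
    · obtain ⟨hx, hfx⟩ := restrict_eq_some.1 hxy
      exact ⟨hx, isInvariant_insert_reachSet hfo x hx y hfx⟩
    · obtain ⟨hx, hfx⟩ := restrict_eq_some.1 hxy
      exact ⟨hS.2 (mem_compl.1 hx),
        hS.2 (mem_compl.1 (isInvariant_compl_insert_reachSet x hx y hfx))⟩

lemma card_isNilpotent_apply_eq_none_eq_sum (o : X) :
    #{f | PartialInjective f ∧ IsNilpotent f ∧ f o = none} =
      ∑ P ∈ (univ.erase o).powerset,
        (#P)! * #{h | PartialInjective h ∧ IsNilpotent h ∧ SupportedIn h (univ.erase o \ P)} := by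
  rw [card_eq_sum_card_fiberwise (f := reachSet o) (t := (univ.erase o).powerset)
    fun f _ => mem_powerset.2 fun x hx => mem_erase.2 ⟨(mem_reachSet.1 hx).1, mem_univ x⟩]
  refine sum_congr rfl fun P hP => ?_
  rw [filter_filter, card_filter_reachSet_eq fun h => (mem_erase.1 (mem_powerset.1 hP h)).1 rfl]

theorem card_isNilpotent_apply_eq_none (o : X) :
    #{f | PartialInjective f ∧ IsNilpotent f ∧ f o = none} =
      #{f | PartialInjective f ∧ SupportedIn f (univ.erase o)} := by
  rw [card_isNilpotent_apply_eq_none_eq_sum, card_supportedIn_eq_sum_isNilpotent]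

end Counting

end PartialMap

open Finset PartialMap

lemma iterMap_eq_iterate_s14 (n : ℕ) (f : Fin n → Option (Fin n)) (k : ℕ) :
    iterMap n f k = iterate f k := by
  induction k with
  | zero => rfl
  | succ k ih => funext x; simp only [iterMap, iterate_succ, ih]

lemma nilpotent_iff_isNilpotent {n : ℕ} (α : PInj n) :
    Nilpotent n α ↔ PartialMap.IsNilpotent α.val := by
  simp only [Nilpotent, iterMap_eq_iterate_s14]
  exact ⟨fun ⟨k, _, hk⟩ => ⟨k, hk⟩,
    fun ⟨k, hk⟩ => ⟨k + 1, k.succ_pos, fun x => iterate_eq_none_of_le (hk x) k.le_succ⟩⟩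

open scoped Classical in
lemma ncard_nilpotent_eq_card (n : ℕ) (o : Fin n) :
    Set.ncard {α : PInj n | Nilpotent n α ∧ α.val o = none} =
      #{f : Fin n → Option (Fin n) |
        PartialInjective f ∧ PartialMap.IsNilpotent f ∧ f o = none} := by
  rw [← Nat.card_coe_set_eq, ← Fintype.card_coe, ← Nat.card_eq_fintype_card]
  exact Nat.card_congr
    { toFun := fun α => ⟨α.1.1, mem_filter.2
        ⟨mem_univ _, α.1.2, (nilpotent_iff_isNilpotent α.1).1 α.2.1, α.2.2⟩⟩
      invFun := fun f => ⟨⟨f.1, (mem_filter.1 f.2).2.1⟩,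
        (nilpotent_iff_isNilpotent _).2 (mem_filter.1 f.2).2.2.1, (mem_filter.1 f.2).2.2.2⟩
      left_inv := fun _ => rfl
      right_inv := fun _ => rfl }

theorem stmt14 (n : ℕ) (h : 0 < n) :
    Set.ncard {α : PInj n | Nilpotent n α ∧ α.val ⟨0, h⟩ = none}
      = ∑ j ∈ Finset.range (n - 1 + 1), ((n - 1).choose j) ^ 2 * j.factorial := by
  rw [ncard_nilpotent_eq_card, card_isNilpotent_apply_eq_none, card_supportedIn,
    card_erase_of_mem (mem_univ _), card_univ, Fintype.card_fin]
end
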